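/- arXiv:2005.12437 — 7 statements merged into one kernel-verified Lean document; each statement's English description precedes it below -/
import Mathlib

section
/- For every 0 ≤ i ≤ n, ker 𝒜^i = ran 𝒜^{i−1} + { (h + l^i(S^i h̃), h̃) : h ∈ H^i, h̃ ∈ H̃^i, S^i h̃ ∈ ran D^i } as a sum of subsets of Y^i (here l^i(S^i h̃) is well defined since S^i h̃ ∈ ran D^i). -/
/-!
A cocycle `(ω, μ)` of the twisted complex has `D̃μ = 0` and `Dω = Sμ`. Splitting `μ = D̃ν + h̃`
with `h̃ ∈ H̃`, anticommutativity gives `S h̃ = D(ω + Sν)`, so `S h̃ ∈ ran D` and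
`ω + Sν - l(S h̃)` lies in `ker D = ran D ⊕ H`, say it is `Dξ + h`. Then
`(ω, μ) = 𝒜(ξ, ν) + (h + l(S h̃), h̃)`. Conversely `𝒜 ∘ 𝒜 = 0`, and `(h + l(S h̃), h̃)` is a
cocycle because `D l = id` on `ran D`.
-/

noncomputable section

def twistA {Z Zt : ℕ → Type*}
    [∀ i, NormedAddCommGroup (Z i)] [∀ i, InnerProductSpace ℝ (Z i)]
    [∀ i, NormedAddCommGroup (Zt i)] [∀ i, InnerProductSpace ℝ (Zt i)]
    (D : ∀ i, Z i →L[ℝ] Z (i + 1)) (Dt : ∀ i, Zt i →L[ℝ] Zt (i + 1))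
    (S : ∀ i, Zt i →L[ℝ] Z (i + 1)) (i : ℕ) :
    (Z i × Zt i) →L[ℝ] (Z (i + 1) × Zt (i + 1)) :=
  ((D i).comp (ContinuousLinearMap.fst ℝ (Z i) (Zt i))
      - (S i).comp (ContinuousLinearMap.snd ℝ (Z i) (Zt i))).prod
    ((Dt i).comp (ContinuousLinearMap.snd ℝ (Z i) (Zt i)))

theorem LinearMap.sub_mem_ker_of_apply_eq {R M N : Type*} [Ring R] [AddCommGroup M]
    [AddCommGroup N] [Module R M] [Module R N] {f : M →ₗ[R] N} {g : range f →ₗ[R] M}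
    (hg : ∀ v, f (g v) = v) {w : M} {v : N} (hw : f w = v) (hv : v ∈ range f) :
    w - g ⟨v, hv⟩ ∈ ker f := by
  simp [hg, hw]

section TwistedComplex

variable {Z Zt : ℕ → Type*}
    [∀ i, NormedAddCommGroup (Z i)] [∀ i, InnerProductSpace ℝ (Z i)]
    [∀ i, NormedAddCommGroup (Zt i)] [∀ i, InnerProductSpace ℝ (Zt i)]
    {D : ∀ i, Z i →L[ℝ] Z (i + 1)} {Dt : ∀ i, Zt i →L[ℝ] Zt (i + 1)}
    {S : ∀ i, Zt i →L[ℝ] Z (i + 1)}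

@[simp]
theorem twistA_apply (i : ℕ) (y : Z i × Zt i) :
    twistA D Dt S i y = (D i y.1 - S i y.2, Dt i y.2) :=
  rfl

theorem twistA_eq_zero_iff {i : ℕ} {y : Z i × Zt i} :
    twistA D Dt S i y = 0 ↔ D i y.1 = S i y.2 ∧ Dt i y.2 = 0 := by
  simp [Prod.ext_iff, sub_eq_zero]

theorem twistA_twistA {i : ℕ} (hDD : ∀ x : Z i, D (i + 1) (D i x) = 0)
    (hDtDt : ∀ x : Zt i, Dt (i + 1) (Dt i x) = 0)
    (hanti : ∀ x : Zt i, S (i + 1) (Dt i x) = -D (i + 1) (S i x)) (x : Z i × Zt i) :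
    twistA D Dt S (i + 1) (twistA D Dt S i x) = 0 := by
  simp [hDD, hDtDt, hanti]

variable {l : ∀ i, ↥(LinearMap.range (D i : Z i →ₗ[ℝ] Z (i + 1))) →ₗ[ℝ] Z i}

theorem twistA_add_lift_eq_zero
    {i : ℕ} (hlD : ∀ v : ↥(LinearMap.range (D i : Z i →ₗ[ℝ] Z (i + 1))), D i (l i v) = v)
    {h : Z i} {ht : Zt i}
    (hh : h ∈ LinearMap.ker (D i : Z i →ₗ[ℝ] Z (i + 1)))
    (hht : ht ∈ LinearMap.ker (Dt i : Zt i →ₗ[ℝ] Zt (i + 1)))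
    (hm : S i ht ∈ LinearMap.range (D i : Z i →ₗ[ℝ] Z (i + 1))) :
    twistA D Dt S i (h + l i ⟨S i ht, hm⟩, ht) = 0 := by
  have hl := hlD ⟨S i ht, hm⟩
  simp_all [LinearMap.mem_ker]

theorem sub_lift_mem_ker_of_twistA_eq_zero
    {i : ℕ} (hlD : ∀ v : ↥(LinearMap.range (D i : Z i →ₗ[ℝ] Z (i + 1))), D i (l i v) = v)
    {y : Z i × Zt i} (hy : twistA D Dt S i y = 0) :
    ∃ hm : S i y.2 ∈ LinearMap.range (D i : Z i →ₗ[ℝ] Z (i + 1)),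
      y.1 - l i ⟨S i y.2, hm⟩ ∈ LinearMap.ker (D i : Z i →ₗ[ℝ] Z (i + 1)) :=
  have hD := (twistA_eq_zero_iff.1 hy).1
  ⟨⟨y.1, hD⟩, LinearMap.sub_mem_ker_of_apply_eq hlD hD _⟩

theorem exists_eq_twistA_add_lift_of_twistA_eq_zero
    {m : ℕ} (hanti : ∀ x : Zt m, S (m + 1) (Dt m x) = -D (m + 1) (S m x))
    (hlD : ∀ v : ↥(LinearMap.range (D (m + 1) : Z (m + 1) →ₗ[ℝ] Z (m + 1 + 1))),
      D (m + 1) (l (m + 1) v) = v)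
    {Hs : Submodule ℝ (Z (m + 1))} {Hst : Submodule ℝ (Zt (m + 1))}
    (hker : LinearMap.ker (D (m + 1) : Z (m + 1) →ₗ[ℝ] Z (m + 1 + 1))
      = LinearMap.range (D m : Z m →ₗ[ℝ] Z (m + 1)) ⊔ Hs)
    (hkert : LinearMap.ker (Dt (m + 1) : Zt (m + 1) →ₗ[ℝ] Zt (m + 1 + 1))
      = LinearMap.range (Dt m : Zt m →ₗ[ℝ] Zt (m + 1)) ⊔ Hst)
    {y : Z (m + 1) × Zt (m + 1)} (hy : twistA D Dt S (m + 1) y = 0) :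
    ∃ x : Z m × Zt m, ∃ h ∈ Hs, ∃ ht ∈ Hst,
      ∃ hm : S (m + 1) ht ∈ LinearMap.range (D (m + 1) : Z (m + 1) →ₗ[ℝ] Z (m + 1 + 1)),
        y = twistA D Dt S m x + (h + l (m + 1) ⟨S (m + 1) ht, hm⟩, ht) := by
  obtain ⟨hDω, hDtμ⟩ := twistA_eq_zero_iff.1 hy
  obtain ⟨_, ⟨ν, rfl⟩, ht, hht, hμ⟩ := Submodule.mem_sup.1 (hkert ▸ hDtμ :
    y.2 ∈ LinearMap.range (Dt m : Zt m →ₗ[ℝ] Zt (m + 1)) ⊔ Hst)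
  simp only [ContinuousLinearMap.coe_coe] at hμ
  have hDw : D (m + 1) (y.1 + S m ν) = S (m + 1) ht := by
    rw [map_add, hDω, ← hμ, map_add, hanti]
    abel
  obtain ⟨_, ⟨ξ, rfl⟩, h, hh, hw⟩ := Submodule.mem_sup.1
    (hker ▸ LinearMap.sub_mem_ker_of_apply_eq hlD hDw ⟨_, hDw⟩)
  simp only [ContinuousLinearMap.coe_coe] at hw
  refine ⟨(ξ, ν), h, hh, ht, hht, ⟨_, hDw⟩, Prod.ext ?_ hμ.symm⟩
  simp only [twistA_apply, Prod.fst_add]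
  linear_combination (norm := abel) -hw

end TwistedComplex

theorem stmt_6_general
    (n : ℕ)
    {Z Zt : ℕ → Type*}
    [∀ i, NormedAddCommGroup (Z i)] [∀ i, InnerProductSpace ℝ (Z i)]
    [∀ i, NormedAddCommGroup (Zt i)] [∀ i, InnerProductSpace ℝ (Zt i)]
    (D : ∀ i, Z i →L[ℝ] Z (i + 1)) (Dt : ∀ i, Zt i →L[ℝ] Zt (i + 1))
    (S : ∀ i, Zt i →L[ℝ] Z (i + 1))
    (hDD : ∀ i (x : Z i), D (i + 1) (D i x) = 0)
    (hDtDt : ∀ i (x : Zt i), Dt (i + 1) (Dt i x) = 0)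
    (hanti : ∀ i (x : Zt i), S (i + 1) (Dt i x) = -D (i + 1) (S i x))
    -- the cohomology representatives `H^i`, `H̃^i`:
    (Hs : ∀ i, Submodule ℝ (Z i)) (Hst : ∀ i, Submodule ℝ (Zt i))
    (hH0 : LinearMap.ker (D 0 : Z 0 →ₗ[ℝ] Z (0 + 1)) = ⊥ ⊔ Hs 0 ∧ Disjoint (⊥ : Submodule ℝ (Z 0)) (Hs 0))
    (hH : ∀ m, m + 1 ≤ n →
      LinearMap.ker (D (m + 1) : Z (m + 1) →ₗ[ℝ] Z (m + 1 + 1)) = LinearMap.range (D m : Z m →ₗ[ℝ] Z (m + 1)) ⊔ Hs (m + 1)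
        ∧ Disjoint (LinearMap.range (D m : Z m →ₗ[ℝ] Z (m + 1))) (Hs (m + 1)))
    (hHt0 : LinearMap.ker (Dt 0 : Zt 0 →ₗ[ℝ] Zt (0 + 1)) = ⊥ ⊔ Hst 0 ∧ Disjoint (⊥ : Submodule ℝ (Zt 0)) (Hst 0))
    (hHt : ∀ m, m + 1 ≤ n →
      LinearMap.ker (Dt (m + 1) : Zt (m + 1) →ₗ[ℝ] Zt (m + 1 + 1)) = LinearMap.range (Dt m : Zt m →ₗ[ℝ] Zt (m + 1)) ⊔ Hst (m + 1)
        ∧ Disjoint (LinearMap.range (Dt m : Zt m →ₗ[ℝ] Zt (m + 1))) (Hst (m + 1)))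
    -- the inverse `l^i : ran D^i → W^i` of `D^i : W^i → ran D^i`:
    (l : ∀ i, ↥(LinearMap.range (D i : Z i →ₗ[ℝ] Z (i + 1))) →ₗ[ℝ] Z i)
    (hlD : ∀ i (v : ↥(LinearMap.range (D i : Z i →ₗ[ℝ] Z (i + 1)))), D i (l i v) = (v : Z (i + 1))) :
    -- at position `0`:
    ((∀ y : Z 0 × Zt 0, twistA D Dt S 0 y = 0 ↔
        ∃ h ∈ Hs 0, ∃ ht ∈ Hst 0, ∃ hm : S 0 ht ∈ LinearMap.range (D 0 : Z 0 →ₗ[ℝ] Z (0 + 1)),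
          y = (h + l 0 ⟨S 0 ht, hm⟩, ht)) ∧
    -- at positions `i = m + 1 ≤ n`:
      (∀ m, m + 1 ≤ n → ∀ y : Z (m + 1) × Zt (m + 1),
        twistA D Dt S (m + 1) y = 0 ↔
          ∃ x : Z m × Zt m, ∃ h ∈ Hs (m + 1), ∃ ht ∈ Hst (m + 1),
            ∃ hm : S (m + 1) ht ∈ LinearMap.range (D (m + 1) : Z (m + 1) →ₗ[ℝ] Z (m + 1 + 1)),
              y = twistA D Dt S m x + (h + l (m + 1) ⟨S (m + 1) ht, hm⟩, ht))) := by
  have hker0 : LinearMap.ker (D 0 : Z 0 →ₗ[ℝ] Z (0 + 1)) = Hs 0 := by rw [hH0.1, bot_sup_eq]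
  have hkert0 : LinearMap.ker (Dt 0 : Zt 0 →ₗ[ℝ] Zt (0 + 1)) = Hst 0 := by
    rw [hHt0.1, bot_sup_eq]
  refine ⟨fun y => ⟨fun hy => ?_, ?_⟩, fun m hmn y =>
    ⟨exists_eq_twistA_add_lift_of_twistA_eq_zero (hanti m) (hlD _) (hH m hmn).1 (hHt m hmn).1, ?_⟩⟩
  · obtain ⟨hm, hker⟩ := sub_lift_mem_ker_of_twistA_eq_zero (hlD 0) hy
    exact ⟨_, hker0 ▸ hker, y.2, hkert0 ▸ (twistA_eq_zero_iff.1 hy).2, hm, by simp⟩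
  · rintro ⟨h, hh, ht, hht, hm, rfl⟩
    exact twistA_add_lift_eq_zero (hlD _) (hker0 ▸ hh) (hkert0 ▸ hht) hm
  · rintro ⟨x, h, hh, ht, hht, hm, rfl⟩
    rw [map_add, twistA_twistA (hDD m) (hDtDt m) (hanti m), zero_add]
    exact twistA_add_lift_eq_zero (hlD _) ((hH m hmn).1 ▸ Submodule.mem_sup_right hh)
      ((hHt m hmn).1 ▸ Submodule.mem_sup_right hht) hm

theorem stmt_6
    (n : ℕ) (hn : 1 ≤ n)
    {Z Zt : ℕ → Type*}
    [∀ i, NormedAddCommGroup (Z i)] [∀ i, InnerProductSpace ℝ (Z i)] [∀ i, CompleteSpace (Z i)]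
    [∀ i, NormedAddCommGroup (Zt i)] [∀ i, InnerProductSpace ℝ (Zt i)] [∀ i, CompleteSpace (Zt i)]
    (D : ∀ i, Z i →L[ℝ] Z (i + 1)) (Dt : ∀ i, Zt i →L[ℝ] Zt (i + 1))
    (S : ∀ i, Zt i →L[ℝ] Z (i + 1))
    (hDD : ∀ i (x : Z i), D (i + 1) (D i x) = 0)
    (hDtDt : ∀ i (x : Zt i), Dt (i + 1) (Dt i x) = 0)
    (hDtop : ∀ i, n ≤ i → D i = 0) (hDttop : ∀ i, n ≤ i → Dt i = 0)
    (hStop : ∀ i, n ≤ i → S i = 0)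
    (hanti : ∀ i (x : Zt i), S (i + 1) (Dt i x) = -D (i + 1) (S i x))
    -- the cohomology representatives `H^i`, `H̃^i`:
    (Hs : ∀ i, Submodule ℝ (Z i)) (Hst : ∀ i, Submodule ℝ (Zt i))
    (hH0 : LinearMap.ker (D 0 : Z 0 →ₗ[ℝ] Z (0 + 1)) = ⊥ ⊔ Hs 0 ∧ Disjoint (⊥ : Submodule ℝ (Z 0)) (Hs 0))
    (hH : ∀ m, m + 1 ≤ n →
      LinearMap.ker (D (m + 1) : Z (m + 1) →ₗ[ℝ] Z (m + 1 + 1)) = LinearMap.range (D m : Z m →ₗ[ℝ] Z (m + 1)) ⊔ Hs (m + 1)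
        ∧ Disjoint (LinearMap.range (D m : Z m →ₗ[ℝ] Z (m + 1))) (Hs (m + 1)))
    (hHt0 : LinearMap.ker (Dt 0 : Zt 0 →ₗ[ℝ] Zt (0 + 1)) = ⊥ ⊔ Hst 0 ∧ Disjoint (⊥ : Submodule ℝ (Zt 0)) (Hst 0))
    (hHt : ∀ m, m + 1 ≤ n →
      LinearMap.ker (Dt (m + 1) : Zt (m + 1) →ₗ[ℝ] Zt (m + 1 + 1)) = LinearMap.range (Dt m : Zt m →ₗ[ℝ] Zt (m + 1)) ⊔ Hst (m + 1)
        ∧ Disjoint (LinearMap.range (Dt m : Zt m →ₗ[ℝ] Zt (m + 1))) (Hst (m + 1)))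
    -- the complements `W^i` of `ker D^i` in `Z^i`:
    (Ws : ∀ i, Submodule ℝ (Z i))
    (hW : ∀ i, i ≤ n → (⊤ : Submodule ℝ (Z i)) = LinearMap.ker (D i : Z i →ₗ[ℝ] Z (i + 1)) ⊔ Ws i
        ∧ Disjoint (LinearMap.ker (D i : Z i →ₗ[ℝ] Z (i + 1))) (Ws i))
    -- the inverse `l^i : ran D^i → W^i` of `D^i : W^i → ran D^i`:
    (l : ∀ i, ↥(LinearMap.range (D i : Z i →ₗ[ℝ] Z (i + 1))) →ₗ[ℝ] Z i)
    (hlW : ∀ i (v : ↥(LinearMap.range (D i : Z i →ₗ[ℝ] Z (i + 1)))), l i v ∈ Ws i)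
    (hlD : ∀ i (v : ↥(LinearMap.range (D i : Z i →ₗ[ℝ] Z (i + 1)))), D i (l i v) = (v : Z (i + 1))) :
    -- at position `0`:
    ((∀ y : Z 0 × Zt 0, twistA D Dt S 0 y = 0 ↔
        ∃ h ∈ Hs 0, ∃ ht ∈ Hst 0, ∃ hm : S 0 ht ∈ LinearMap.range (D 0 : Z 0 →ₗ[ℝ] Z (0 + 1)),
          y = (h + l 0 ⟨S 0 ht, hm⟩, ht)) ∧
    -- at positions `i = m + 1 ≤ n`:
      (∀ m, m + 1 ≤ n → ∀ y : Z (m + 1) × Zt (m + 1),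
        twistA D Dt S (m + 1) y = 0 ↔
          ∃ x : Z m × Zt m, ∃ h ∈ Hs (m + 1), ∃ ht ∈ Hst (m + 1),
            ∃ hm : S (m + 1) ht ∈ LinearMap.range (D (m + 1) : Z (m + 1) →ₗ[ℝ] Z (m + 1 + 1)),
              y = twistA D Dt S m x + (h + l (m + 1) ⟨S (m + 1) ht, hm⟩, ht))) :=
  stmt_6_general n D Dt S hDD hDtDt hanti Hs Hst hH0 hH hHt0 hHt l hlD
end
end

section
/- Assume in addition that S^i(ker D̃^i) ⊆ ran D^i for every 0 ≤ i ≤ n−1. Then for every 0 ≤ i ≤ n, ker 𝒜^i = ran 𝒜^{i−1} ⊕ { (h + l^i(S^i h̃), h̃) : h ∈ H^i, h̃ ∈ H̃^i } as an internal direct sum of subspaces of Y^i. -/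
/-!
A pair `(ω, μ)` lies in the kernel of `𝒜^i` exactly when `D̃^i μ = 0` and `D^i ω = S^i μ`.
Because `S^i μ ∈ ran D^i`, the second condition says that `ω - l^i(S^i μ) ∈ ker D^i`, so
`ker 𝒜^i` is the graph `{(k + l^i(S^i k̃), k̃) : k ∈ ker D^i, k̃ ∈ ker D̃^i}`.
Splitting `k̃ = D̃^{i-1} μ' + h̃` and subtracting `𝒜^{i-1}(0, μ')` reduces to the case `k̃ = h̃`,
and splitting `k = D^{i-1} ω' + h` then exhibits `𝒜^{i-1}(ω', μ')` as the remaining summand.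
The sum is direct since the second component forces `h̃ = 0`, and then the first forces `h = 0`.
-/

noncomputable section

section TwistMap

open LinearMap

variable {R M₀ M₁ M₂ N₀ N₁ N₂ : Type*} [Ring R]
  [AddCommGroup M₀] [Module R M₀] [AddCommGroup M₁] [Module R M₁] [AddCommGroup M₂] [Module R M₂]
  [AddCommGroup N₀] [Module R N₀] [AddCommGroup N₁] [Module R N₁] [AddCommGroup N₂] [Module R N₂]

def twistMap (D : M₁ →ₗ[R] M₂) (Dt : N₁ →ₗ[R] N₂) (S : N₁ →ₗ[R] M₂) :
    M₁ × N₁ →ₗ[R] M₂ × N₂ :=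
  (D ∘ₗ fst R M₁ N₁ - S ∘ₗ snd R M₁ N₁).prod (Dt ∘ₗ snd R M₁ N₁)

@[simp]
theorem twistMap_apply (D : M₁ →ₗ[R] M₂) (Dt : N₁ →ₗ[R] N₂) (S : N₁ →ₗ[R] M₂) (y : M₁ × N₁) :
    twistMap D Dt S y = (D y.1 - S y.2, Dt y.2) :=
  rfl

theorem twistMap_twistMap {D₀ : M₀ →ₗ[R] M₁} {D₁ : M₁ →ₗ[R] M₂} {Dt₀ : N₀ →ₗ[R] N₁}
    {Dt₁ : N₁ →ₗ[R] N₂} {S₀ : N₀ →ₗ[R] M₁} {S₁ : N₁ →ₗ[R] M₂}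
    (hDD : ∀ x, D₁ (D₀ x) = 0) (hDtDt : ∀ x, Dt₁ (Dt₀ x) = 0)
    (hanti : ∀ x, S₁ (Dt₀ x) = -D₁ (S₀ x)) (x : M₀ × N₀) :
    twistMap D₁ Dt₁ S₁ (twistMap D₀ Dt₀ S₀ x) = 0 := by
  simp [hDD, hDtDt, hanti]

variable {D₀ : M₀ →ₗ[R] M₁} {D₁ : M₁ →ₗ[R] M₂} {Dt₀ : N₀ →ₗ[R] N₁} {Dt₁ : N₁ →ₗ[R] N₂}
  {S₀ : N₀ →ₗ[R] M₁} {S₁ : N₁ →ₗ[R] M₂} {l : range D₁ →ₗ[R] M₁}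

theorem twistMap_eq_zero_iff (hl : ∀ v, D₁ (l v) = v)
    (hS : ∀ x ∈ ker Dt₁, S₁ x ∈ range D₁) (y : M₁ × N₁) :
    twistMap D₁ Dt₁ S₁ y = 0 ↔
      ∃ k ∈ ker D₁, ∃ kt ∈ ker Dt₁, ∃ hm : S₁ kt ∈ range D₁, y = (k + l ⟨S₁ kt, hm⟩, kt) := by
  constructor
  · intro hy
    obtain ⟨hy₁, hy₂⟩ := Prod.ext_iff.mp hy
    have hy₂ : y.2 ∈ ker Dt₁ := hy₂
    have hm := hS y.2 hy₂
    refine ⟨y.1 - l ⟨S₁ y.2, hm⟩, ?_, y.2, hy₂, hm, by simp⟩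
    simpa [hl] using hy₁
  · rintro ⟨k, hk, kt, hkt, hm, rfl⟩
    rw [twistMap_apply, map_add, hl, mem_ker.mp hk, mem_ker.mp hkt, zero_add, sub_self,
      Prod.mk_zero_zero]

theorem twistMap_eq_zero_iff_exists_twistMap_add {H : Submodule R M₁} {Ht : Submodule R N₁}
    (hDD : ∀ x, D₁ (D₀ x) = 0) (hDtDt : ∀ x, Dt₁ (Dt₀ x) = 0)
    (hanti : ∀ x, S₁ (Dt₀ x) = -D₁ (S₀ x))
    (hH : ker D₁ = range D₀ ⊔ H) (hHt : ker Dt₁ = range Dt₀ ⊔ Ht)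
    (hl : ∀ v, D₁ (l v) = v) (hS : ∀ x ∈ ker Dt₁, S₁ x ∈ range D₁) (y : M₁ × N₁) :
    twistMap D₁ Dt₁ S₁ y = 0 ↔
      ∃ x : M₀ × N₀, ∃ h ∈ H, ∃ ht ∈ Ht, ∃ hm : S₁ ht ∈ range D₁,
        y = twistMap D₀ Dt₀ S₀ x + (h + l ⟨S₁ ht, hm⟩, ht) := by
  constructor
  · intro hy
    have hy₂ : y.2 ∈ range Dt₀ ⊔ Ht := hHt ▸ (Prod.ext_iff.mp hy).2
    obtain ⟨_, ⟨μ, rfl⟩, ht, hht, hμ⟩ := Submodule.mem_sup.mp hy₂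
    have hy' : twistMap D₁ Dt₁ S₁ (y - twistMap D₀ Dt₀ S₀ (0, μ)) = 0 := by
      rw [map_sub, hy, twistMap_twistMap hDD hDtDt hanti, sub_zero]
    obtain ⟨k, hk, kt, -, hm, hk'⟩ := (twistMap_eq_zero_iff hl hS _).mp hy'
    obtain rfl : ht = kt := by simpa [← hμ] using congrArg Prod.snd hk'
    obtain ⟨_, ⟨ω, rfl⟩, h, hh, rfl⟩ := Submodule.mem_sup.mp (hH ▸ hk)
    refine ⟨(ω, μ), h, hh, ht, hht, hm, ?_⟩
    rw [sub_eq_iff_eq_add'.mp hk']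
    ext
    · simp only [twistMap_apply, Prod.fst_add, map_zero]
      abel
    · simp only [twistMap_apply, Prod.snd_add]
  · rintro ⟨x, h, hh, ht, hht, hm, rfl⟩
    rw [map_add, twistMap_twistMap hDD hDtDt hanti, zero_add, twistMap_eq_zero_iff hl hS]
    exact ⟨h, hH ▸ Submodule.mem_sup_right hh, ht, hHt ▸ Submodule.mem_sup_right hht, hm, rfl⟩

theorem twistMap_eq_zero_of_eq {H : Submodule R M₁} {Ht : Submodule R N₁}
    (hH : Disjoint (range D₀) H) (hHt : Disjoint (range Dt₀) Ht)
    (hS₀ : ∀ x ∈ ker Dt₀, S₀ x ∈ range D₀) {x : M₀ × N₀} {h : M₁} {ht : N₁}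
    (hh : h ∈ H) (hht : ht ∈ Ht) (hm : S₁ ht ∈ range D₁)
    (heq : twistMap D₀ Dt₀ S₀ x = (h + l ⟨S₁ ht, hm⟩, ht)) :
    twistMap D₀ Dt₀ S₀ x = 0 := by
  obtain ⟨heq₁, heq₂⟩ := Prod.ext_iff.mp heq
  simp only [twistMap_apply] at heq₁ heq₂
  obtain rfl : ht = 0 := Submodule.disjoint_def.mp hHt ht ⟨x.2, heq₂⟩ hht
  have hx₂ : x.2 ∈ ker Dt₀ := heq₂
  have hl0 : l ⟨S₁ 0, hm⟩ = 0 := by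
    rw [show (⟨S₁ 0, hm⟩ : range D₁) = 0 from Subtype.ext (map_zero S₁), map_zero]
  rw [hl0, add_zero] at heq₁
  obtain rfl : h = 0 :=
    Submodule.disjoint_def.mp hH h (heq₁ ▸ Submodule.sub_mem _ ⟨x.1, rfl⟩ (hS₀ _ hx₂)) hh
  rw [heq, hl0, add_zero, Prod.mk_zero_zero]

end TwistMap

theorem twistA_apply_s7 {Z Zt : ℕ → Type*}
    [∀ i, NormedAddCommGroup (Z i)] [∀ i, InnerProductSpace ℝ (Z i)]
    [∀ i, NormedAddCommGroup (Zt i)] [∀ i, InnerProductSpace ℝ (Zt i)]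
    (D : ∀ i, Z i →L[ℝ] Z (i + 1)) (Dt : ∀ i, Zt i →L[ℝ] Zt (i + 1))
    (S : ∀ i, Zt i →L[ℝ] Z (i + 1)) (i : ℕ) (y : Z i × Zt i) :
    twistA D Dt S i y = twistMap (D i : Z i →ₗ[ℝ] Z (i + 1)) (Dt i) (S i) y :=
  rfl

theorem stmt_7_general
    (n : ℕ)
    {Z Zt : ℕ → Type*}
    [∀ i, NormedAddCommGroup (Z i)] [∀ i, InnerProductSpace ℝ (Z i)]
    [∀ i, NormedAddCommGroup (Zt i)] [∀ i, InnerProductSpace ℝ (Zt i)]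
    (D : ∀ i, Z i →L[ℝ] Z (i + 1)) (Dt : ∀ i, Zt i →L[ℝ] Zt (i + 1))
    (S : ∀ i, Zt i →L[ℝ] Z (i + 1))
    (hDD : ∀ i (x : Z i), D (i + 1) (D i x) = 0)
    (hDtDt : ∀ i (x : Zt i), Dt (i + 1) (Dt i x) = 0)
    (hStop : ∀ i, n ≤ i → S i = 0)
    (hanti : ∀ i (x : Zt i), S (i + 1) (Dt i x) = -D (i + 1) (S i x))
    (Hs : ∀ i, Submodule ℝ (Z i)) (Hst : ∀ i, Submodule ℝ (Zt i))
    (hH0 : LinearMap.ker (D 0 : Z 0 →ₗ[ℝ] Z (0 + 1)) = ⊥ ⊔ Hs 0 ∧ Disjoint (⊥ : Submodule ℝ (Z 0)) (Hs 0))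
    (hH : ∀ m, m + 1 ≤ n →
      LinearMap.ker (D (m + 1) : Z (m + 1) →ₗ[ℝ] Z (m + 1 + 1)) = LinearMap.range (D m : Z m →ₗ[ℝ] Z (m + 1)) ⊔ Hs (m + 1)
        ∧ Disjoint (LinearMap.range (D m : Z m →ₗ[ℝ] Z (m + 1))) (Hs (m + 1)))
    (hHt0 : LinearMap.ker (Dt 0 : Zt 0 →ₗ[ℝ] Zt (0 + 1)) = ⊥ ⊔ Hst 0 ∧ Disjoint (⊥ : Submodule ℝ (Zt 0)) (Hst 0))
    (hHt : ∀ m, m + 1 ≤ n →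
      LinearMap.ker (Dt (m + 1) : Zt (m + 1) →ₗ[ℝ] Zt (m + 1 + 1)) = LinearMap.range (Dt m : Zt m →ₗ[ℝ] Zt (m + 1)) ⊔ Hst (m + 1)
        ∧ Disjoint (LinearMap.range (Dt m : Zt m →ₗ[ℝ] Zt (m + 1))) (Hst (m + 1)))
    (l : ∀ i, ↥(LinearMap.range (D i : Z i →ₗ[ℝ] Z (i + 1))) →ₗ[ℝ] Z i)
    (hlD : ∀ i (v : ↥(LinearMap.range (D i : Z i →ₗ[ℝ] Z (i + 1)))), D i (l i v) = (v : Z (i + 1)))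
    -- the additional assumption: `S^i (ker D̃^i) ⊆ ran D^i` for `0 ≤ i ≤ n-1`
    (hSker : ∀ i, i + 1 ≤ n → ∀ x ∈ LinearMap.ker (Dt i : Zt i →ₗ[ℝ] Zt (i + 1)), S i x ∈ LinearMap.range (D i : Z i →ₗ[ℝ] Z (i + 1))) :
    -- `ker 𝒜^i = ran 𝒜^{i-1} ⊕ {(h + l^i(S^i ht), ht) : h ∈ H^i, ht ∈ H̃^i}`.
    -- At position `0` (`ran 𝒜^{-1} = 0`):
    ((∀ y : Z 0 × Zt 0, twistA D Dt S 0 y = 0 ↔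
        ∃ h ∈ Hs 0, ∃ ht ∈ Hst 0, ∃ hm : S 0 ht ∈ LinearMap.range (D 0 : Z 0 →ₗ[ℝ] Z (0 + 1)),
          y = (h + l 0 ⟨S 0 ht, hm⟩, ht)) ∧
    -- at positions `i = m + 1 ≤ n`: every kernel element decomposes, ...
      (∀ m, m + 1 ≤ n → ∀ y : Z (m + 1) × Zt (m + 1),
        twistA D Dt S (m + 1) y = 0 ↔
          ∃ x : Z m × Zt m, ∃ h ∈ Hs (m + 1), ∃ ht ∈ Hst (m + 1),
            ∃ hm : S (m + 1) ht ∈ LinearMap.range (D (m + 1) : Z (m + 1) →ₗ[ℝ] Z (m + 1 + 1)),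
              y = twistA D Dt S m x + (h + l (m + 1) ⟨S (m + 1) ht, hm⟩, ht)) ∧
    -- ... and the sum is direct: the two pieces intersect trivially.
      (∀ m, m + 1 ≤ n → ∀ x : Z m × Zt m, ∀ h ∈ Hs (m + 1), ∀ ht ∈ Hst (m + 1),
        ∀ hm : S (m + 1) ht ∈ LinearMap.range (D (m + 1) : Z (m + 1) →ₗ[ℝ] Z (m + 1 + 1)),
          twistA D Dt S m x = (h + l (m + 1) ⟨S (m + 1) ht, hm⟩, ht) →
            twistA D Dt S m x = 0)) := by
  have hS : ∀ i, ∀ x ∈ LinearMap.ker (Dt i : Zt i →ₗ[ℝ] Zt (i + 1)),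
      S i x ∈ LinearMap.range (D i : Z i →ₗ[ℝ] Z (i + 1)) := by
    intro i x hx
    by_cases hi : i + 1 ≤ n
    · exact hSker i hi x hx
    · simp [hStop i (by omega)]
  refine ⟨fun y => ?_, fun m hm y => ?_, fun m hm x h hh ht hht hSht => ?_⟩
  · rw [twistA_apply_s7, twistMap_eq_zero_iff (hlD 0) (hS 0), hH0.1, hHt0.1, bot_sup_eq, bot_sup_eq]
    rfl
  · exact twistMap_eq_zero_iff_exists_twistMap_add (hDD m) (hDtDt m) (hanti m) (hH m hm).1
      (hHt m hm).1 (hlD (m + 1)) (hS (m + 1)) y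
  · exact twistMap_eq_zero_of_eq (hH m hm).2 (hHt m hm).2 (hS m) hh hht hSht

theorem stmt_7
    (n : ℕ) (hn : 1 ≤ n)
    {Z Zt : ℕ → Type*}
    [∀ i, NormedAddCommGroup (Z i)] [∀ i, InnerProductSpace ℝ (Z i)] [∀ i, CompleteSpace (Z i)]
    [∀ i, NormedAddCommGroup (Zt i)] [∀ i, InnerProductSpace ℝ (Zt i)] [∀ i, CompleteSpace (Zt i)]
    (D : ∀ i, Z i →L[ℝ] Z (i + 1)) (Dt : ∀ i, Zt i →L[ℝ] Zt (i + 1))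
    (S : ∀ i, Zt i →L[ℝ] Z (i + 1))
    (hDD : ∀ i (x : Z i), D (i + 1) (D i x) = 0)
    (hDtDt : ∀ i (x : Zt i), Dt (i + 1) (Dt i x) = 0)
    (hDtop : ∀ i, n ≤ i → D i = 0) (hDttop : ∀ i, n ≤ i → Dt i = 0)
    (hStop : ∀ i, n ≤ i → S i = 0)
    (hanti : ∀ i (x : Zt i), S (i + 1) (Dt i x) = -D (i + 1) (S i x))
    (Hs : ∀ i, Submodule ℝ (Z i)) (Hst : ∀ i, Submodule ℝ (Zt i))
    (hH0 : LinearMap.ker (D 0 : Z 0 →ₗ[ℝ] Z (0 + 1)) = ⊥ ⊔ Hs 0 ∧ Disjoint (⊥ : Submodule ℝ (Z 0)) (Hs 0))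
    (hH : ∀ m, m + 1 ≤ n →
      LinearMap.ker (D (m + 1) : Z (m + 1) →ₗ[ℝ] Z (m + 1 + 1)) = LinearMap.range (D m : Z m →ₗ[ℝ] Z (m + 1)) ⊔ Hs (m + 1)
        ∧ Disjoint (LinearMap.range (D m : Z m →ₗ[ℝ] Z (m + 1))) (Hs (m + 1)))
    (hHt0 : LinearMap.ker (Dt 0 : Zt 0 →ₗ[ℝ] Zt (0 + 1)) = ⊥ ⊔ Hst 0 ∧ Disjoint (⊥ : Submodule ℝ (Zt 0)) (Hst 0))
    (hHt : ∀ m, m + 1 ≤ n →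
      LinearMap.ker (Dt (m + 1) : Zt (m + 1) →ₗ[ℝ] Zt (m + 1 + 1)) = LinearMap.range (Dt m : Zt m →ₗ[ℝ] Zt (m + 1)) ⊔ Hst (m + 1)
        ∧ Disjoint (LinearMap.range (Dt m : Zt m →ₗ[ℝ] Zt (m + 1))) (Hst (m + 1)))
    (Ws : ∀ i, Submodule ℝ (Z i))
    (hW : ∀ i, i ≤ n → (⊤ : Submodule ℝ (Z i)) = LinearMap.ker (D i : Z i →ₗ[ℝ] Z (i + 1)) ⊔ Ws i
        ∧ Disjoint (LinearMap.ker (D i : Z i →ₗ[ℝ] Z (i + 1))) (Ws i))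
    (l : ∀ i, ↥(LinearMap.range (D i : Z i →ₗ[ℝ] Z (i + 1))) →ₗ[ℝ] Z i)
    (hlW : ∀ i (v : ↥(LinearMap.range (D i : Z i →ₗ[ℝ] Z (i + 1)))), l i v ∈ Ws i)
    (hlD : ∀ i (v : ↥(LinearMap.range (D i : Z i →ₗ[ℝ] Z (i + 1)))), D i (l i v) = (v : Z (i + 1)))
    -- the additional assumption: `S^i (ker D̃^i) ⊆ ran D^i` for `0 ≤ i ≤ n-1`
    (hSker : ∀ i, i + 1 ≤ n → ∀ x ∈ LinearMap.ker (Dt i : Zt i →ₗ[ℝ] Zt (i + 1)), S i x ∈ LinearMap.range (D i : Z i →ₗ[ℝ] Z (i + 1))) :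
    -- `ker 𝒜^i = ran 𝒜^{i-1} ⊕ {(h + l^i(S^i ht), ht) : h ∈ H^i, ht ∈ H̃^i}`.
    -- At position `0` (`ran 𝒜^{-1} = 0`):
    ((∀ y : Z 0 × Zt 0, twistA D Dt S 0 y = 0 ↔
        ∃ h ∈ Hs 0, ∃ ht ∈ Hst 0, ∃ hm : S 0 ht ∈ LinearMap.range (D 0 : Z 0 →ₗ[ℝ] Z (0 + 1)),
          y = (h + l 0 ⟨S 0 ht, hm⟩, ht)) ∧
    -- at positions `i = m + 1 ≤ n`: every kernel element decomposes, ...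
      (∀ m, m + 1 ≤ n → ∀ y : Z (m + 1) × Zt (m + 1),
        twistA D Dt S (m + 1) y = 0 ↔
          ∃ x : Z m × Zt m, ∃ h ∈ Hs (m + 1), ∃ ht ∈ Hst (m + 1),
            ∃ hm : S (m + 1) ht ∈ LinearMap.range (D (m + 1) : Z (m + 1) →ₗ[ℝ] Z (m + 1 + 1)),
              y = twistA D Dt S m x + (h + l (m + 1) ⟨S (m + 1) ht, hm⟩, ht)) ∧
    -- ... and the sum is direct: the two pieces intersect trivially.
      (∀ m, m + 1 ≤ n → ∀ x : Z m × Zt m, ∀ h ∈ Hs (m + 1), ∀ ht ∈ Hst (m + 1),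
        ∀ hm : S (m + 1) ht ∈ LinearMap.range (D (m + 1) : Z (m + 1) →ₗ[ℝ] Z (m + 1 + 1)),
          twistA D Dt S m x = (h + l (m + 1) ⟨S (m + 1) ht, hm⟩, ht) →
            twistA D Dt S m x = 0)) :=
  stmt_7_general n D Dt S hDD hDtDt hStop hanti Hs Hst hH0 hH hHt0 hHt l hlD hSker
end
end

section
/- For all integers n ≥ 1, 0 ≤ k < n and 1 ≤ m ≤ n, the linear map s^{k,m} : Alt^{k,m}(ℝ^n) → Alt^{k+1,m−1}(ℝ^n) is injective if k ≤ m − 1 and surjective if k ≥ m − 1. -/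
/-!
Put `t := swap ∘ s ∘ swap`, where `swap` exchanges the outer and the inner arguments. Expanding
both composites, the double sums cancel and `s t - t s = a - b` on `Alt^{a+1,b+1}`, while
`t s = b + 1` on `Alt^{0,b+1}`. For the coordinate inner product of a basis, `t` is a positive
multiple of the adjoint of `s`. So if `s μ = 0` with `a < b`, then `s t μ = (a - b) μ`, and
`(b + 2) (a - b) ‖μ‖² = (b + 2) ⟨s t μ, μ⟩ = (a + 1) ‖t μ‖² ≥ 0` forces `μ = 0`.
Surjectivity for `b ≤ a` is the dual statement: `t` is injective by the first part applied to
swapped forms, hence `s t` is positive definite and therefore invertible.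
-/

open Fin Function

@[simp]
theorem AlternatingMap.sum_apply {R M N ι κ : Type*} [CommSemiring R] [AddCommMonoid M]
    [Module R M] [AddCommMonoid N] [Module R N] (s : Finset κ) (f : κ → M [⋀^ι]→ₗ[R] N)
    (v : ι → M) : (∑ i ∈ s, f i) v = ∑ i ∈ s, f i v :=
  map_sum (⟨⟨fun g => g v, rfl⟩, fun _ _ => rfl⟩ : (M [⋀^ι]→ₗ[R] N) →+ N) f s

theorem AlternatingMap.map_cons_self_removeNth {R M N : Type*} [CommRing R] [AddCommGroup M]
    [Module R M] [AddCommGroup N] [Module R N] {n : ℕ} (f : M [⋀^Fin (n + 1)]→ₗ[R] N)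
    (w : Fin (n + 1) → M) (j : Fin (n + 1)) :
    f (cons (w j) (j.removeNth w)) = (-1) ^ (j : ℕ) • f w := by
  rw [← insertNth_self_removeNth j w, AlternatingMap.map_insertNth, removeNth_insertNth,
    insertNth_apply_same, smul_smul, ← pow_add, Even.neg_one_pow ⟨j, rfl⟩, one_smul]
  rfl

instance AlternatingMap.moduleFinite {K M N ι : Type*} [Field K] [AddCommGroup M] [Module K M]
    [Module.Finite K M] [AddCommGroup N] [Module K N] [Module.Finite K N] [Finite ι] :
    Module.Finite K (M [⋀^ι]→ₗ[K] N) :=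
  Module.Finite.of_injective AlternatingMap.toMultilinearMapLM
    AlternatingMap.coe_multilinearMap_injective

-- Unlike `LinearMap.surjective_of_injective`, this applies to nested alternating maps without
-- unifying their `AddCommMonoid` with the one induced by `AddCommGroup`, which is very slow.
theorem LinearMap.surjective_of_injective' {K V : Type*} [Field K] [AddCommMonoid V]
    [Module K V] [Module.Finite K V] {f : V →ₗ[K] V} (hf : Injective f) : Surjective f :=
  let := Module.addCommMonoidToAddCommGroup K (M := V)
  LinearMap.surjective_of_injective hf

-- The paper's `Alt^{a,b}(M)`.
abbrev Bialt (R M : Type*) [CommRing R] [AddCommGroup M] [Module R M] (a b : ℕ) : Type _ :=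
  M [⋀^Fin a]→ₗ[R] (M [⋀^Fin b]→ₗ[R] R)

namespace Bialt

section Algebra

variable {R M : Type*} [CommRing R] [AddCommGroup M] [Module R M] {a b : ℕ}

def swapLinear : Bialt R M a b →ₗ[R] Bialt R M b a where
  toFun μ :=
    { toFun w :=
        { toFun v := μ v w
          map_update_add' v i x y := by simp
          map_update_smul' v i c x := by simp
          map_eq_zero_of_eq' v i j hv hij := by simp [μ.map_eq_zero_of_eq v hv hij] }
      map_update_add' w i x y := by ext v; simp
      map_update_smul' w i c x := by ext v; simp
      map_eq_zero_of_eq' w i j hw hij := by ext v; simp [(μ v).map_eq_zero_of_eq w hw hij] }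
  map_add' μ ν := rfl
  map_smul' c μ := rfl

def swap : Bialt R M a b ≃ₗ[R] Bialt R M b a :=
  LinearEquiv.ofLinearMap swapLinear swapLinear rfl rfl

@[simp]
theorem swap_apply (μ : Bialt R M a b) (w : Fin b → M) (v : Fin a → M) :
    swap μ w v = μ v w :=
  rfl

@[simp]
theorem swap_swap (μ : Bialt R M a b) : swap (swap μ) = μ :=
  rfl

def s : Bialt R M a (b + 1) →ₗ[R] Bialt R M (a + 1) b where
  toFun μ := AlternatingMap.alternatizeUncurryFin
    { toFun x := (AlternatingMap.curryLeftLinearMap.flip x).compAlternatingMap μ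
      map_add' x y := by ext; simp
      map_smul' c x := by ext; simp }
  map_add' μ ν := by
    ext; simp [AlternatingMap.alternatizeUncurryFin_apply, Finset.sum_add_distrib]
  map_smul' c μ := by
    ext; simp [AlternatingMap.alternatizeUncurryFin_apply, Finset.mul_sum, mul_left_comm]

theorem s_apply (μ : Bialt R M a (b + 1)) (v : Fin (a + 1) → M) (w : Fin b → M) :
    s μ v w = ∑ l : Fin (a + 1), (-1) ^ (l : ℕ) * μ (l.removeNth v) (cons (v l) w) := by
  simp [s, AlternatingMap.alternatizeUncurryFin_apply]
  rfl

def t : Bialt R M (a + 1) b →ₗ[R] Bialt R M a (b + 1) :=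
  swap.toLinearMap ∘ₗ s ∘ₗ swap.toLinearMap

theorem t_apply (ν : Bialt R M (a + 1) b) (v : Fin a → M) (w : Fin (b + 1) → M) :
    t ν v w = ∑ j : Fin (b + 1), (-1) ^ (j : ℕ) * ν (cons (w j) v) (j.removeNth w) := by
  simp [t, s_apply]

theorem s_t_eq_swap (ν : Bialt R M (a + 1) b) : s (t ν) = swap (t (s (swap ν))) :=
  rfl

theorem t_s_apply (μ : Bialt R M a (b + 1)) (v : Fin a → M) (w : Fin (b + 1) → M) :
    t (s μ) v w = (b + 1) * μ v w + ∑ i : Fin a, ∑ j : Fin (b + 1), (-1) ^ (i + j + 1 : ℕ) *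
      μ (i.succ.removeNth (cons (w j) v : Fin (a + 1) → M)) (cons (v i) (j.removeNth w)) := by
  have hj : ∀ j : Fin (b + 1), (-1) ^ (j : ℕ) * s μ (cons (w j) v) (j.removeNth w) =
      μ v w + ∑ i : Fin a, (-1) ^ (i + j + 1 : ℕ) *
        μ (i.succ.removeNth (cons (w j) v : Fin (a + 1) → M)) (cons (v i) (j.removeNth w)) := by
    intro j
    rw [s_apply, Fin.sum_univ_succ, removeNth_zero, tail_cons, cons_zero,
      AlternatingMap.map_cons_self_removeNth, mul_add, Finset.mul_sum]
    congr 1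
    · simp [← mul_assoc, ← pow_add]
    · refine Finset.sum_congr rfl fun i _ => ?_
      rw [cons_succ, val_succ, ← mul_assoc, ← pow_add]
      ring_nf
  rw [t_apply, Finset.sum_congr rfl fun j _ => hj j, Finset.sum_add_distrib, Finset.sum_comm]
  simp

theorem t_s_eq_smul_of_zero (μ : Bialt R M 0 (b + 1)) : t (s μ) = (b + 1 : R) • μ := by
  ext v w
  simp [t_s_apply]

theorem s_t_apply (ν : Bialt R M (a + 1) b) (v : Fin (a + 1) → M) (w : Fin b → M) :
    s (t ν) v w = (a + 1) * ν v w + ∑ i : Fin (a + 1), ∑ j : Fin b, (-1) ^ (i + j + 1 : ℕ) *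
      ν (cons (w j) (i.removeNth v)) (j.succ.removeNth (cons (v i) w : Fin (b + 1) → M)) := by
  rw [s_t_eq_swap, swap_apply, t_s_apply, Finset.sum_comm]
  congr 1
  refine Finset.sum_congr rfl fun i _ => Finset.sum_congr rfl fun j _ => ?_
  rw [add_comm (j : ℕ)]
  rfl

theorem s_t_eq_t_s_add (μ : Bialt R M (a + 1) (b + 1)) :
    s (t μ) = t (s μ) + ((a : R) - b) • μ := by
  ext v w
  have hv (i : Fin (a + 1)) (x : M) :
      i.succ.removeNth (cons x v : Fin (a + 2) → M) = cons x (i.removeNth v) :=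
    cons_comp_succ_succAbove x v i
  have hw (j : Fin (b + 1)) (x : M) :
      j.succ.removeNth (cons x w : Fin (b + 2) → M) = cons x (j.removeNth w) :=
    cons_comp_succ_succAbove x w j
  simp only [AlternatingMap.add_apply, AlternatingMap.smul_apply, smul_eq_mul, t_s_apply,
    s_t_apply, hv, hw]
  ring

end Algebra

section Pairing

variable {R M ι : Type*} [CommRing R] [AddCommGroup M] [Module R M] [Fintype ι]
  (B : Module.Basis ι R M) {a b : ℕ}

noncomputable def pairing (μ ν : Bialt R M a b) : R :=
  ∑ f : Fin a → ι, ∑ g : Fin b → ι, μ (B ∘ f) (B ∘ g) * ν (B ∘ f) (B ∘ g)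

theorem pairing_comm (μ ν : Bialt R M a b) : pairing B μ ν = pairing B ν μ := by
  simp only [pairing, mul_comm]

theorem pairing_swap (μ ν : Bialt R M a b) : pairing B (swap μ) (swap ν) = pairing B μ ν := by
  rw [pairing, Finset.sum_comm]
  rfl

theorem pairing_smul_left (c : R) (μ ν : Bialt R M a b) :
    pairing B (c • μ) ν = c * pairing B μ ν := by
  simp only [pairing, Finset.mul_sum, AlternatingMap.smul_apply, smul_eq_mul, mul_assoc]

@[simp]
theorem pairing_zero_left (ν : Bialt R M a b) : pairing B 0 ν = 0 := by
  simp [pairing]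

noncomputable def pairingCons (μ : Bialt R M a (b + 1)) (ν : Bialt R M (a + 1) b) : R :=
  ∑ c : ι, ∑ f : Fin a → ι, ∑ g : Fin b → ι,
    μ (B ∘ f) (cons (B c) (B ∘ g)) * ν (cons (B c) (B ∘ f)) (B ∘ g)

theorem pairingCons_swap (μ : Bialt R M a (b + 1)) (ν : Bialt R M (a + 1) b) :
    pairingCons B (swap ν) (swap μ) = pairingCons B μ ν := by
  simp only [pairingCons, swap_apply, mul_comm (ν _ _)]
  exact Finset.sum_congr rfl fun c _ => Finset.sum_comm

theorem pairing_s_left (μ : Bialt R M a (b + 1)) (ν : Bialt R M (a + 1) b) :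
    pairing B (s μ) ν = (a + 1) * pairingCons B μ ν := by
  have hsign (l : Fin (a + 1)) (u : Fin (a + 1) → M) (w : Fin b → M) :
      (-1) ^ (l : ℕ) * μ (l.removeNth u) (cons (u l) w) * ν u w =
        μ (l.removeNth u) (cons (u l) w) * ν (cons (u l) (l.removeNth u)) w := by
    rw [AlternatingMap.map_cons_self_removeNth, AlternatingMap.smul_apply, zsmul_eq_mul]
    push_cast
    ring
  have hsum (l : Fin (a + 1)) : ∑ F : Fin (a + 1) → ι, ∑ G : Fin b → ι, (-1) ^ (l : ℕ) *
      μ (l.removeNth (B ∘ F)) (cons ((B ∘ F) l) (B ∘ G)) * ν (B ∘ F) (B ∘ G) =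
        pairingCons B μ ν := by
    simp only [hsign]
    exact ((insertNthEquiv (fun _ => ι) l).symm.sum_comp fun p => ∑ G : Fin b → ι,
      μ (B ∘ p.2) (cons (B p.1) (B ∘ G)) * ν (cons (B p.1) (B ∘ p.2)) (B ∘ G)).trans
      (Fintype.sum_prod_type _)
  simp only [pairing, s_apply, Finset.sum_mul]
  rw [Finset.sum_congr rfl fun F _ => Finset.sum_comm, Finset.sum_comm,
    Finset.sum_congr rfl fun l _ => hsum l]
  simp

theorem pairing_t_right (μ : Bialt R M a (b + 1)) (ν : Bialt R M (a + 1) b) :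
    pairing B μ (t ν) = (b + 1) * pairingCons B μ ν := by
  rw [← pairing_swap, pairing_comm, t, LinearMap.comp_apply, LinearMap.comp_apply,
    LinearEquiv.coe_coe, LinearEquiv.coe_coe, swap_swap, pairing_s_left, pairingCons_swap]

theorem s_adjoint (μ : Bialt R M a (b + 1)) (ν : Bialt R M (a + 1) b) :
    (b + 1) * pairing B (s μ) ν = (a + 1) * pairing B μ (t ν) := by
  rw [pairing_s_left, pairing_t_right]
  ring

end Pairing

section Positivity

variable {K M ι : Type*} [Field K] [LinearOrder K] [IsStrictOrderedRing K] [AddCommGroup M]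
  [Module K M] [Fintype ι] (B : Module.Basis ι K M) {a b : ℕ}

theorem pairing_self_nonneg (μ : Bialt K M a b) : 0 ≤ pairing B μ μ :=
  Finset.sum_nonneg fun _ _ => Finset.sum_nonneg fun _ _ => mul_self_nonneg _

theorem pairing_self_eq_zero {μ : Bialt K M a b} (h : pairing B μ μ = 0) : μ = 0 := by
  have hcoord (f : Fin a → ι) (g : Fin b → ι) : μ (B ∘ f) (B ∘ g) = 0 := by
    rw [pairing, Finset.sum_eq_zero_iff_of_nonneg fun _ _ =>
      Finset.sum_nonneg fun _ _ => mul_self_nonneg _] at h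
    exact mul_self_eq_zero.mp <| (Finset.sum_eq_zero_iff_of_nonneg fun _ _ =>
      mul_self_nonneg _).mp (h f (Finset.mem_univ f)) g (Finset.mem_univ g)
  exact B.ext_alternating fun f _ => B.ext_alternating fun g _ => hcoord f g

end Positivity

variable {K M : Type*} [Field K] [LinearOrder K] [IsStrictOrderedRing K] [AddCommGroup M]
  [Module K M] [Module.Finite K M] {a b : ℕ}

theorem s_injective (h : a ≤ b) :
    Injective (s : Bialt K M a (b + 1) →ₗ[K] Bialt K M (a + 1) b) := by
  rw [injective_iff_map_eq_zero]
  intro μ hμ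
  cases a with
  | zero =>
    have hts := t_s_eq_smul_of_zero μ
    rw [hμ, map_zero, eq_comm, smul_eq_zero] at hts
    exact hts.resolve_left (by positivity)
  | succ a =>
    let B := Module.finBasis K M
    have hst : s (t μ) = ((a : K) - b) • μ := by
      rw [s_t_eq_t_s_add, hμ, map_zero]
      exact zero_add _
    have hadj := s_adjoint B (t μ) μ
    rw [hst, pairing_smul_left] at hadj
    have hab : (a : K) + 1 ≤ b := by exact_mod_cast h
    have hneg : ((b + 1 : ℕ) + 1 : K) * ((a : K) - b) < 0 :=
      mul_neg_of_pos_of_neg (by positivity) (by linarith)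
    have hnonneg : 0 ≤ ((b + 1 : ℕ) + 1 : K) * ((a : K) - b) * pairing B μ μ := by
      rw [mul_assoc, hadj]
      exact mul_nonneg (by positivity) (pairing_self_nonneg B (t μ))
    exact pairing_self_eq_zero B (le_antisymm (nonpos_of_mul_nonneg_right hnonneg hneg)
      (pairing_self_nonneg B μ))

theorem t_injective (h : b ≤ a) :
    Injective (t : Bialt K M (a + 1) b →ₗ[K] Bialt K M a (b + 1)) :=
  swap.injective.comp ((s_injective h).comp swap.injective)

theorem s_surjective (h : b ≤ a) :
    Surjective (s : Bialt K M a (b + 1) →ₗ[K] Bialt K M (a + 1) b) := by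
  let B := Module.finBasis K M
  have hst : Injective (s ∘ₗ t : Bialt K M (a + 1) b →ₗ[K] Bialt K M (a + 1) b) := by
    rw [injective_iff_map_eq_zero]
    intro ν hν
    have hadj := s_adjoint B (t ν) ν
    rw [LinearMap.comp_apply] at hν
    rw [hν, pairing_zero_left, mul_zero, eq_comm, mul_eq_zero] at hadj
    have htν : t ν = 0 :=
      pairing_self_eq_zero B (hadj.resolve_left (by positivity))
    exact t_injective h (htν.trans (map_zero t).symm)
  have hsurj := LinearMap.surjective_of_injective' hst
  rw [LinearMap.coe_comp] at hsurj
  exact hsurj.of_comp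

end Bialt

theorem stmt_12_general (n k m' : ℕ)
    (s : (EuclideanSpace ℝ (Fin n)) [⋀^Fin k]→ₗ[ℝ]
           ((EuclideanSpace ℝ (Fin n)) [⋀^Fin (m' + 1)]→ₗ[ℝ] ℝ) →ₗ[ℝ]
         (EuclideanSpace ℝ (Fin n)) [⋀^Fin (k + 1)]→ₗ[ℝ]
           ((EuclideanSpace ℝ (Fin n)) [⋀^Fin m']→ₗ[ℝ] ℝ))
    (hs : ∀ (μ : (EuclideanSpace ℝ (Fin n)) [⋀^Fin k]→ₗ[ℝ]
              ((EuclideanSpace ℝ (Fin n)) [⋀^Fin (m' + 1)]→ₗ[ℝ] ℝ))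
        (v : Fin (k + 1) → EuclideanSpace ℝ (Fin n))
        (w : Fin m' → EuclideanSpace ℝ (Fin n)),
        s μ v w = ∑ l : Fin (k + 1),
          (-1 : ℝ) ^ (l : ℕ) * μ (fun j => v (l.succAbove j)) (Fin.cons (v l) w)) :
    (k ≤ m' → Function.Injective s) ∧ (m' ≤ k → Function.Surjective s) := by
  obtain rfl : s = Bialt.s :=
    LinearMap.ext fun μ => AlternatingMap.ext fun v => AlternatingMap.ext fun w => by
      rw [hs, Bialt.s_apply]
      rfl
  exact ⟨Bialt.s_injective, Bialt.s_surjective⟩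

theorem stmt_12 (n k m' : ℕ) (hk : k < n) (hm : m' + 1 ≤ n)
    (s : (EuclideanSpace ℝ (Fin n)) [⋀^Fin k]→ₗ[ℝ]
           ((EuclideanSpace ℝ (Fin n)) [⋀^Fin (m' + 1)]→ₗ[ℝ] ℝ) →ₗ[ℝ]
         (EuclideanSpace ℝ (Fin n)) [⋀^Fin (k + 1)]→ₗ[ℝ]
           ((EuclideanSpace ℝ (Fin n)) [⋀^Fin m']→ₗ[ℝ] ℝ))
    (hs : ∀ (μ : (EuclideanSpace ℝ (Fin n)) [⋀^Fin k]→ₗ[ℝ]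
              ((EuclideanSpace ℝ (Fin n)) [⋀^Fin (m' + 1)]→ₗ[ℝ] ℝ))
        (v : Fin (k + 1) → EuclideanSpace ℝ (Fin n))
        (w : Fin m' → EuclideanSpace ℝ (Fin n)),
        s μ v w = ∑ l : Fin (k + 1),
          (-1 : ℝ) ^ (l : ℕ) * μ (fun j => v (l.succAbove j)) (Fin.cons (v l) w)) :
    (k ≤ m' → Function.Injective s) ∧ (m' ≤ k → Function.Surjective s) :=
  stmt_12_general n k m' s hs
end

section
/- For integers n ≥ 1 and 0 ≤ k < n: if n − 2k − 1 ≥ 0 then the up operator U_k : W(n,k) → W(n,k+1) is injective, and if n − 2k − 1 ≤ 0 then U_k is surjective. -/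
/-- `W(n,k)`: real-valued functions on the `k`-element subsets of `{1,…,n}`. -/
def Wsp (n k : ℕ) : Type := {s : Finset (Fin n) // s.card = k} → ℝ

/-- The up operator `U_k : W(n,k) → W(n,k+1)`, `(U_k f)(J) = ∑_{j ∈ J} f(J \ {j})`. -/
noncomputable def upOp (n k : ℕ) (f : Wsp n k) : Wsp n (k + 1) := fun J =>
  ∑ j ∈ J.1.attach, f ⟨J.1.erase j.1, by
    simp [Finset.card_erase_of_mem j.2, J.2]⟩

/-!
The down operator `∂` is the adjoint of `U`, and the two satisfy the `sl₂` relation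
`∂ U - U ∂ = (n - 2k) • id` on `W(n,k)`. Hence
`‖U f‖² = ‖∂ f‖² + (n - 2k) ‖f‖² ≥ (n - 2k) ‖f‖²`, so `U_k` is injective once `n - 2k ≥ 1`;
symmetrically `‖∂ g‖² ≥ (2k + 2 - n) ‖g‖²` on `W(n,k+1)`, so `∂` is injective once
`n ≤ 2k + 1`. Then `U ∂` is an injective, hence surjective, endomorphism of the
finite-dimensional space `W(n,k+1)`, and so `U_k` is surjective.
-/

open Finset

section DotProduct

variable {ι R : Type*} [Fintype ι] [Ring R] [LinearOrder R] [IsStrictOrderedRing R]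

lemma dotProduct_self_nonneg (v : ι → R) : 0 ≤ v ⬝ᵥ v :=
  sum_nonneg fun i _ => mul_self_nonneg (v i)

lemma eq_zero_of_mul_dotProduct_self_nonpos {c : R} (hc : 0 < c) {v : ι → R}
    (h : c * (v ⬝ᵥ v) ≤ 0) : v = 0 :=
  dotProduct_self_eq_zero.mp
    (le_antisymm (nonpos_of_mul_nonpos_right h hc) (dotProduct_self_nonneg v))

end DotProduct

namespace UpOperator

-- `KSubset n k → ℝ` is `Wsp n k` with its pointwise module structure visible to instances.
abbrev KSubset (n k : ℕ) := {s : Finset (Fin n) // s.card = k}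

variable {n k : ℕ}

-- Extending by zero to all finsets lets `insert`/`erase` be used without carrying card proofs.
noncomputable def extendByZero (f : KSubset n k → ℝ) (s : Finset (Fin n)) : ℝ :=
  if h : s.card = k then f ⟨s, h⟩ else 0

lemma extendByZero_of_card_eq (f : KSubset n k → ℝ) {s : Finset (Fin n)} (h : s.card = k) :
    extendByZero f s = f ⟨s, h⟩ :=
  dif_pos h

lemma extendByZero_add (f g : KSubset n k → ℝ) (s : Finset (Fin n)) :
    extendByZero (f + g) s = extendByZero f s + extendByZero g s := by
  unfold extendByZero; split_ifs <;> simp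

lemma extendByZero_smul (c : ℝ) (f : KSubset n k → ℝ) (s : Finset (Fin n)) :
    extendByZero (c • f) s = c * extendByZero f s := by
  unfold extendByZero; split_ifs <;> simp

variable (n k) in
noncomputable def up : (KSubset n k → ℝ) →ₗ[ℝ] (KSubset n (k + 1) → ℝ) where
  toFun := upOp n k
  map_add' _ _ := funext fun _ => sum_add_distrib
  map_smul' _ _ := funext fun _ => (mul_sum _ _ _).symm

variable (n k) in
noncomputable def down : (KSubset n (k + 1) → ℝ) →ₗ[ℝ] (KSubset n k → ℝ) where
  toFun g I := ∑ j ∈ I.1ᶜ, extendByZero g (insert j I.1)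
  map_add' f g := funext fun I => by simp only [extendByZero_add, sum_add_distrib, Pi.add_apply]
  map_smul' c f := funext fun I => by simp only [extendByZero_smul, ← mul_sum]; rfl

-- The common off-diagonal part of `∂ U` and `U ∂`; each differs from it by a multiple of `id`.
variable (n k) in
noncomputable def exchange (f : KSubset n k → ℝ) : KSubset n k → ℝ := fun I =>
  ∑ j ∈ I.1ᶜ, ∑ i ∈ I.1, extendByZero f (insert j (I.1.erase i))

lemma up_apply (f : KSubset n k → ℝ) (J : KSubset n (k + 1)) :
    up n k f J = ∑ j ∈ J.1, extendByZero f (J.1.erase j) := by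
  rw [← sum_attach]
  refine sum_congr rfl fun j _ => ?_
  rw [extendByZero_of_card_eq f (by simp [card_erase_of_mem j.2, J.2])]

lemma down_apply (g : KSubset n (k + 1) → ℝ) (I : KSubset n k) :
    down n k g I = ∑ j ∈ I.1ᶜ, extendByZero g (insert j I.1) :=
  rfl

lemma down_up (f : KSubset n k → ℝ) :
    down n k (up n k f) = ((n : ℝ) - k) • f + exchange n k f := by
  funext I
  have hk : k ≤ n := by simpa [I.2] using card_le_univ I.1
  have insert_term : ∀ j ∈ I.1ᶜ, extendByZero (up n k f) (insert j I.1)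
      = f I + ∑ i ∈ I.1, extendByZero f (insert j (I.1.erase i)) := by
    intro j hj
    have hjI : j ∉ I.1 := mem_compl.mp hj
    rw [extendByZero_of_card_eq _ (by rw [card_insert_of_notMem hjI, I.2]), up_apply,
      sum_insert hjI, erase_insert hjI, extendByZero_of_card_eq _ I.2]
    congr 1
    refine sum_congr rfl fun i hi => ?_
    rw [erase_insert_of_ne (ne_of_mem_of_not_mem hi hjI).symm]
  rw [down_apply, sum_congr rfl insert_term, sum_add_distrib, sum_const, card_compl, I.2]
  simp [exchange, Nat.cast_sub hk]

lemma up_down (g : KSubset n (k + 1) → ℝ) :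
    up n k (down n k g) = ((k : ℝ) + 1) • g + exchange n (k + 1) g := by
  funext J
  have erase_term : ∀ i ∈ J.1, extendByZero (down n k g) (J.1.erase i)
      = g J + ∑ j ∈ J.1ᶜ, extendByZero g (insert j (J.1.erase i)) := by
    intro i hi
    rw [extendByZero_of_card_eq _ (by simp [card_erase_of_mem hi, J.2]), down_apply,
      compl_erase, sum_insert (by simpa using hi), insert_erase hi, extendByZero_of_card_eq _ J.2]
  rw [up_apply, sum_congr rfl erase_term, sum_add_distrib, sum_const, J.2]
  simp only [Pi.add_apply, Pi.smul_apply, exchange, sum_comm (s := J.1), nsmul_eq_mul, smul_eq_mul]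
  push_cast
  ring

lemma exchange_zero (f : KSubset n 0 → ℝ) : exchange n 0 f = 0 := by
  funext I
  simp [exchange, card_eq_zero.mp I.2]

lemma down_up_succ (g : KSubset n (k + 1) → ℝ) :
    down n (k + 1) (up n (k + 1) g) = up n k (down n k g) + ((n : ℝ) - 2 * (k + 1)) • g := by
  ext I
  simp only [down_up, up_down, Pi.add_apply, Pi.smul_apply, smul_eq_mul]
  push_cast
  ring

lemma up_dotProduct (f : KSubset n k → ℝ) (g : KSubset n (k + 1) → ℝ) :
    up n k f ⬝ᵥ g = f ⬝ᵥ down n k g := by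
  simp only [dotProduct, up_apply, down_apply, sum_mul, mul_sum]
  rw [sum_sigma', sum_sigma']
  refine sum_bij'
    (fun a ha => ⟨⟨a.1.1.erase a.2, by
      simp [card_erase_of_mem (mem_sigma.mp ha).2, a.1.2]⟩, a.2⟩)
    (fun b hb => ⟨⟨insert b.2 b.1.1, by
      rw [card_insert_of_notMem (mem_compl.mp (mem_sigma.mp hb).2), b.1.2]⟩, b.2⟩)
    (fun a _ => by simp) (fun b _ => by simp) ?_ ?_ ?_
  · rintro ⟨J, j⟩ hj
    have hjJ : j ∈ J.1 := (mem_sigma.mp hj).2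
    simp only [Sigma.mk.injEq, heq_eq_eq, and_true]
    exact Subtype.ext (insert_erase hjJ)
  · rintro ⟨I, j⟩ hj
    have hjI : j ∉ I.1 := mem_compl.mp (mem_sigma.mp hj).2
    simp only [Sigma.mk.injEq, heq_eq_eq, and_true]
    exact Subtype.ext (erase_insert hjI)
  · rintro ⟨J, j⟩ hj
    have hjJ : j ∈ J.1 := (mem_sigma.mp hj).2
    rw [extendByZero_of_card_eq f (by simp [card_erase_of_mem hjJ, J.2]), insert_erase hjJ,
      extendByZero_of_card_eq g J.2]

lemma up_dotProduct_up_succ (g : KSubset n (k + 1) → ℝ) :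
    up n (k + 1) g ⬝ᵥ up n (k + 1) g
      = down n k g ⬝ᵥ down n k g + ((n : ℝ) - 2 * (k + 1)) * (g ⬝ᵥ g) := by
  rw [up_dotProduct, dotProduct_comm, down_up_succ, add_dotProduct, smul_dotProduct,
    up_dotProduct, smul_eq_mul]

lemma up_dotProduct_up_zero (f : KSubset n 0 → ℝ) :
    up n 0 f ⬝ᵥ up n 0 f = n * (f ⬝ᵥ f) := by
  rw [up_dotProduct, dotProduct_comm, down_up, exchange_zero, add_zero, smul_dotProduct,
    smul_eq_mul, Nat.cast_zero, sub_zero]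

lemma mul_dotProduct_self_le_up (f : KSubset n k → ℝ) :
    ((n : ℝ) - 2 * k) * (f ⬝ᵥ f) ≤ up n k f ⬝ᵥ up n k f := by
  cases k with
  | zero => simp [up_dotProduct_up_zero]
  | succ k =>
    rw [up_dotProduct_up_succ]
    push_cast
    linarith [dotProduct_self_nonneg (down n k f)]

lemma mul_dotProduct_self_le_down (g : KSubset n (k + 1) → ℝ) :
    (2 * ((k : ℝ) + 1) - n) * (g ⬝ᵥ g) ≤ down n k g ⬝ᵥ down n k g := by
  linarith [up_dotProduct_up_succ g, dotProduct_self_nonneg (up n (k + 1) g)]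

variable (n k)

theorem up_injective (h : 2 * k + 1 ≤ n) : Function.Injective (up n k) := by
  refine (injective_iff_map_eq_zero _).mpr fun f hf => eq_zero_of_mul_dotProduct_self_nonpos ?_
    ((mul_dotProduct_self_le_up f).trans_eq (by simp [hf]))
  have : (2 * k + 1 : ℝ) ≤ n := by exact_mod_cast h
  linarith

theorem down_injective (h : n ≤ 2 * k + 1) : Function.Injective (down n k) := by
  refine (injective_iff_map_eq_zero _).mpr fun g hg => eq_zero_of_mul_dotProduct_self_nonpos ?_
    ((mul_dotProduct_self_le_down g).trans_eq (by simp [hg]))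
  have : (n : ℝ) ≤ 2 * k + 1 := by exact_mod_cast h
  linarith

theorem up_surjective (h : n ≤ 2 * k + 1) : Function.Surjective (up n k) := by
  suffices Function.Surjective (up n k ∘ down n k) from this.of_comp
  rw [← LinearMap.coe_comp, ← LinearMap.injective_iff_surjective]
  refine (injective_iff_map_eq_zero _).mpr fun g hg =>
    (injective_iff_map_eq_zero _).mp (down_injective n k h) g ?_
  rw [← dotProduct_self_eq_zero, ← up_dotProduct, ← LinearMap.comp_apply, hg, zero_dotProduct]

end UpOperator

open UpOperator in
theorem stmt_13_general (n k : ℕ) :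
    ((0 : ℤ) ≤ (n : ℤ) - 2 * k - 1 → Function.Injective (upOp n k)) ∧
      ((n : ℤ) - 2 * k - 1 ≤ 0 → Function.Surjective (upOp n k)) :=
  ⟨fun h => up_injective n k (by omega), fun h => up_surjective n k (by omega)⟩

theorem stmt_13 (n k : ℕ) (hn : 1 ≤ n) (hk : k < n) :
    ((0 : ℤ) ≤ (n : ℤ) - 2 * k - 1 → Function.Injective (upOp n k)) ∧
      ((n : ℤ) - 2 * k - 1 ≤ 0 → Function.Surjective (upOp n k)) :=
  stmt_13_general n k
end

section
/- Under the stated hypotheses, Y admits the Hodge decomposition Y = ran D ⊕ 𝔥 ⊕ ran (D')* as an orthogonal direct sum of closed subspaces; in particular ker D' = ran D ⊕ 𝔥 orthogonally, and the orthogonal complement of ker D' in Y equals ran (D')*. -/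
/-!
If `w ⊥ ker D'`, the functional `D' u ↦ ⟪w, u⟫` is well defined on `ran D'`. It is bounded
because the projection of the graph of `D'` onto `ran D'` is a surjection between Banach spaces,
hence a quotient map by the open mapping theorem; its Riesz representative `z` then satisfies
`(D')* z = w`. This is the closed range theorem `(ker D')ᗮ = ran (D')*`. Since `ran D ⊆ ker D'`
are closed, orthogonal projection splits `ker D' = ran D ⊕ (ker D' ⊓ (ran D)ᗮ)` and
`Y = ker D' ⊕ (ker D')ᗮ`.
-/

open InnerProductSpace

theorem ContinuousLinearMap.exists_comp_eq_of_ker_le {𝕜 E F G : Type*}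
    [NontriviallyNormedField 𝕜]
    [NormedAddCommGroup E] [NormedSpace 𝕜 E] [CompleteSpace E]
    [NormedAddCommGroup F] [NormedSpace 𝕜 F] [CompleteSpace F]
    [AddCommGroup G] [Module 𝕜 G] [TopologicalSpace G]
    (T : E →L[𝕜] F) (hT : Function.Surjective T) (φ : E →L[𝕜] G)
    (h : LinearMap.ker (T : E →ₗ[𝕜] F) ≤ LinearMap.ker (φ : E →ₗ[𝕜] G)) :
    ∃ ψ : F →L[𝕜] G, ψ.comp T = φ := by
  let ψ : F →ₗ[𝕜] G := (LinearMap.ker (T : E →ₗ[𝕜] F)).liftQ φ h ∘ₗ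
    (LinearMap.quotKerEquivOfSurjective (T : E →ₗ[𝕜] F) hT).symm.toLinearMap
  have hψ (x : E) : ψ (T x) = φ x := by
    change _ = (φ : E →ₗ[𝕜] G) x
    simp only [ψ, LinearMap.comp_apply, LinearEquiv.coe_coe, ← ContinuousLinearMap.coe_coe T,
      LinearMap.quotKerEquivOfSurjective_symm_apply, Submodule.liftQ_apply]
  have hcont : Continuous ψ := (T.isQuotientMap hT).continuous_iff.mpr <| by
    simpa only [Function.comp_def, hψ] using φ.continuous
  exact ⟨⟨ψ, hcont⟩, ContinuousLinearMap.ext hψ⟩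

namespace LinearPMap

section Graph

variable {R E F : Type*} [CommRing R] [AddCommGroup E] [Module R E]
  [AddCommGroup F] [Module R F]

theorem mem_ker_map_subtype_iff (f : E →ₗ.[R] F) {x : E} :
    x ∈ (LinearMap.ker f.toFun).map f.domain.subtype ↔ (x, 0) ∈ f.graph := by
  simp [mem_graph_iff]

theorem IsClosed.isClosed_ker_map_subtype [TopologicalSpace E] [TopologicalSpace F]
    {f : E →ₗ.[R] F} (hf : f.IsClosed) :
    _root_.IsClosed (((LinearMap.ker f.toFun).map f.domain.subtype : Submodule R E) : Set E) := by
  have : (((LinearMap.ker f.toFun).map f.domain.subtype : Submodule R E) : Set E) =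
      (fun x ↦ (x, (0 : F))) ⁻¹' f.graph := Set.ext fun _ ↦ f.mem_ker_map_subtype_iff
  rw [this]
  exact hf.preimage (continuous_id.prodMk continuous_const)

variable [TopologicalSpace E] [TopologicalSpace F]

def graphToRange (f : E →ₗ.[R] F) : f.graph →L[R] LinearMap.range f.toFun :=
  ((ContinuousLinearMap.snd R E F).comp f.graph.subtypeL).codRestrict _ fun p ↦ by
    obtain ⟨x, -, hx⟩ := f.mem_graph_iff.mp p.2
    exact ⟨x, hx⟩

theorem graphToRange_surjective (f : E →ₗ.[R] F) : Function.Surjective f.graphToRange := by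
  rintro ⟨y, x, rfl⟩
  exact ⟨⟨_, f.mem_graph x⟩, rfl⟩

end Graph

section Adjoint

variable {𝕜 E F : Type*} [RCLike 𝕜] [NormedAddCommGroup E] [InnerProductSpace 𝕜 E]
  [NormedAddCommGroup F] [InnerProductSpace 𝕜 F] {T : E →ₗ.[𝕜] F}

theorem range_adjoint_le_orthogonal_ker [CompleteSpace E] (hT : Dense (T.domain : Set E)) :
    LinearMap.range T†.toFun ≤ ((LinearMap.ker T.toFun).map T.domain.subtype)ᗮ := by
  rintro _ ⟨y, rfl⟩
  rw [Submodule.mem_orthogonal]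
  rintro _ ⟨x, hx, rfl⟩
  rw [inner_eq_zero_symm]
  calc ⟪T† y, (x : E)⟫_𝕜 = ⟪(y : F), T x⟫_𝕜 := adjoint_isFormalAdjoint hT y x
    _ = 0 := by rw [show T x = 0 from hx, inner_zero_right]

theorem orthogonal_ker_le_range_adjoint [CompleteSpace E] [CompleteSpace F]
    (hT : Dense (T.domain : Set E)) (hTc : T.IsClosed)
    (hran : _root_.IsClosed (LinearMap.range T.toFun : Set F)) :
    ((LinearMap.ker T.toFun).map T.domain.subtype)ᗮ ≤ LinearMap.range T†.toFun := by
  intro w hw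
  have : CompleteSpace T.graph := hTc.completeSpace_coe
  have : CompleteSpace (LinearMap.range T.toFun) := hran.completeSpace_coe
  let φ : T.graph →L[𝕜] 𝕜 :=
    (innerSL 𝕜 w).comp ((ContinuousLinearMap.fst 𝕜 E F).comp T.graph.subtypeL)
  have hker : LinearMap.ker (T.graphToRange : T.graph →ₗ[𝕜] LinearMap.range T.toFun) ≤
      LinearMap.ker (φ : T.graph →ₗ[𝕜] 𝕜) := by
    rintro ⟨⟨x, y⟩, hp⟩ hy
    obtain rfl : y = 0 := congrArg Subtype.val hy
    exact inner_eq_zero_symm.mp <|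
      (Submodule.mem_orthogonal _ w).mp hw x (T.mem_ker_map_subtype_iff.mpr hp)
  obtain ⟨ψ, hψ⟩ := T.graphToRange.exists_comp_eq_of_ker_le T.graphToRange_surjective φ hker
  let z : LinearMap.range T.toFun := (toDual 𝕜 _).symm ψ
  have hz (x : T.domain) : ⟪w, (x : E)⟫_𝕜 = ⟪(z : F), T x⟫_𝕜 := by
    calc ⟪w, (x : E)⟫_𝕜 = φ ⟨_, T.mem_graph x⟩ := rfl
      _ = ψ (T.graphToRange ⟨_, T.mem_graph x⟩) := by rw [← hψ]; rfl
      _ = ⟪(z : F), T x⟫_𝕜 := by rw [← toDual_symm_apply]; rfl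
  exact ⟨⟨z, mem_adjoint_domain_of_exists _ ⟨w, hz⟩⟩, adjoint_apply_eq hT _ hz⟩

theorem orthogonal_ker_eq_range_adjoint [CompleteSpace E] [CompleteSpace F]
    (hT : Dense (T.domain : Set E)) (hTc : T.IsClosed)
    (hran : _root_.IsClosed (LinearMap.range T.toFun : Set F)) :
    ((LinearMap.ker T.toFun).map T.domain.subtype)ᗮ = LinearMap.range T†.toFun :=
  le_antisymm (orthogonal_ker_le_range_adjoint hT hTc hran) (range_adjoint_le_orthogonal_ker hT)

end Adjoint

end LinearPMap

theorem stmt_15_general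
    (X Y Zc : Type*)
    [NormedAddCommGroup X] [InnerProductSpace ℝ X]
    [NormedAddCommGroup Y] [InnerProductSpace ℝ Y] [CompleteSpace Y]
    [NormedAddCommGroup Zc] [InnerProductSpace ℝ Zc] [CompleteSpace Zc]
    (D : X →ₗ.[ℝ] Y) (D' : Y →ₗ.[ℝ] Zc)
    (hD'dense : Dense (D'.domain : Set Y))
    (hD'closed : D'.IsClosed)
    -- `ran D ⊆ ker D'`
    (hcompl : LinearMap.range D.toFun ≤ (LinearMap.ker D'.toFun).map D'.domain.subtype)
    -- `ran D` and `ran D'` are closed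
    (hranDcl : IsClosed ((LinearMap.range D.toFun : Submodule ℝ Y) : Set Y))
    (hranD'cl : IsClosed ((LinearMap.range D'.toFun : Submodule ℝ Zc) : Set Zc)) :
    -- notation: `R = ran D`, `Kk = ker D'`, `A = ran (D')*`, `Hh = 𝔥 = Kk ⊓ Rᗮ`
    ∀ R Kk A Hh : Submodule ℝ Y,
      R = LinearMap.range D.toFun →
      Kk = (LinearMap.ker D'.toFun).map D'.domain.subtype →
      A = LinearMap.range D'.adjoint.toFun →
      Hh = Kk ⊓ Rᗮ →
      -- the three pieces are closed,
      (IsClosed (R : Set Y) ∧ IsClosed (Hh : Set Y) ∧ IsClosed (A : Set Y)) ∧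
      -- mutually orthogonal,
      (R ≤ Hhᗮ ∧ R ≤ Aᗮ ∧ Hh ≤ Aᗮ) ∧
      -- and they span `Y`:
      R ⊔ Hh ⊔ A = ⊤ ∧
      -- in particular `ker D' = ran D ⊕ 𝔥` orthogonally
      (Kk = R ⊔ Hh ∧ R ≤ Hhᗮ) ∧
      -- and the orthogonal complement of `ker D'` is `ran (D')*`
      Kkᗮ = A := by
  intro R Kk A Hh hR hKk hA hHh
  have hRK : R ≤ Kk := hR ▸ hKk ▸ hcompl
  have hRcl : IsClosed (R : Set Y) := hR ▸ hranDcl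
  have hKcl : IsClosed (Kk : Set Y) := hKk ▸ hD'closed.isClosed_ker_map_subtype
  have hKA : Kkᗮ = A :=
    hKk ▸ hA ▸ D'.orthogonal_ker_eq_range_adjoint hD'dense hD'closed hranD'cl
  have : CompleteSpace R := hRcl.completeSpace_coe
  have : CompleteSpace Kk := hKcl.completeSpace_coe
  have hKsup : Kk = R ⊔ Hh := by
    rw [hHh, inf_comm, Submodule.sup_orthogonal_inf_of_hasOrthogonalProjection hRK]
  have hRH : R ≤ Hhᗮ :=
    hHh ▸ R.le_orthogonal_orthogonal.trans (Submodule.orthogonal_le inf_le_right)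
  have hHK : Hh ≤ Kk := hHh ▸ inf_le_left
  subst hKA
  refine ⟨⟨hRcl, hHh ▸ hKcl.inter R.isClosed_orthogonal, Kk.isClosed_orthogonal⟩,
    ⟨hRH, hRK.trans Kk.le_orthogonal_orthogonal, hHK.trans Kk.le_orthogonal_orthogonal⟩,
    ?_, ⟨hKsup, hRH⟩, rfl⟩
  rw [← hKsup, Submodule.sup_orthogonal_of_hasOrthogonalProjection]

theorem stmt_15
    (X Y Zc : Type*)
    [NormedAddCommGroup X] [InnerProductSpace ℝ X] [CompleteSpace X]
    [NormedAddCommGroup Y] [InnerProductSpace ℝ Y] [CompleteSpace Y]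
    [NormedAddCommGroup Zc] [InnerProductSpace ℝ Zc] [CompleteSpace Zc]
    (D : X →ₗ.[ℝ] Y) (D' : Y →ₗ.[ℝ] Zc)
    (hDdense : Dense (D.domain : Set X))
    (hD'dense : Dense (D'.domain : Set Y))
    (hDclosed : D.IsClosed) (hD'closed : D'.IsClosed)
    -- `ran D ⊆ ker D'`
    (hcompl : LinearMap.range D.toFun ≤ (LinearMap.ker D'.toFun).map D'.domain.subtype)
    -- `ran D` and `ran D'` are closed
    (hranDcl : IsClosed ((LinearMap.range D.toFun : Submodule ℝ Y) : Set Y))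
    (hranD'cl : IsClosed ((LinearMap.range D'.toFun : Submodule ℝ Zc) : Set Zc)) :
    -- notation: `R = ran D`, `Kk = ker D'`, `A = ran (D')*`, `Hh = 𝔥 = Kk ⊓ Rᗮ`
    ∀ R Kk A Hh : Submodule ℝ Y,
      R = LinearMap.range D.toFun →
      Kk = (LinearMap.ker D'.toFun).map D'.domain.subtype →
      A = LinearMap.range D'.adjoint.toFun →
      Hh = Kk ⊓ Rᗮ →
      -- the three pieces are closed,
      (IsClosed (R : Set Y) ∧ IsClosed (Hh : Set Y) ∧ IsClosed (A : Set Y)) ∧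
      -- mutually orthogonal,
      (R ≤ Hhᗮ ∧ R ≤ Aᗮ ∧ Hh ≤ Aᗮ) ∧
      -- and they span `Y`:
      R ⊔ Hh ⊔ A = ⊤ ∧
      -- in particular `ker D' = ran D ⊕ 𝔥` orthogonally
      (Kk = R ⊔ Hh ∧ R ≤ Hhᗮ) ∧
      -- and the orthogonal complement of `ker D'` is `ran (D')*`
      Kkᗮ = A :=
  stmt_15_general X Y Zc D D' hD'dense hD'closed hcompl hranDcl hranD'cl
end

section
/- For every k ∈ ℤ, ker(D^k) ∩ HW^k = D^{k−1}(HW^{k−1}) ⊕ G^k as an internal direct sum of subspaces of M^k; that is, the spaces G^k represent the cohomology of the domain complex (HW^•, D^•) as well. -/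
/-!
For `u ∈ HW^k`, `D u ∈ ker D ∩ Z_0 = D(Z_γ) ⊕ G`, so `D u = D z + g` with `z ∈ Z_γ`.
Then `g = D(u - z)` lies in `D(Z_0)`, which meets `G` only in `0` (uniform representation at
`q = -γ`); hence `D(HW^k) = D(Z^k_γ)`. On cocycles the extra condition `D u ∈ L` is automatic, so
the decomposition of `ker D ∩ HW` is the one of `ker D ∩ Z_0`.
-/

namespace Submodule

variable {R M N P : Type*} [Ring R] [AddCommGroup M] [AddCommGroup N] [AddCommGroup P]
  [Module R M] [Module R N] [Module R P]

theorem ker_inf_inf_comap_eq (g : N →ₗ[R] P) (A : Submodule R N) (B : Submodule R P) :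
    LinearMap.ker g ⊓ (A ⊓ B.comap g) = LinearMap.ker g ⊓ A := by
  have hker : LinearMap.ker g ≤ B.comap g := comap_mono bot_le
  rw [← inf_assoc, inf_right_comm, inf_eq_left.mpr hker]

theorem map_inf_comap_eq_map_of_le_sup_of_disjoint (f : M →ₗ[R] N) (g : N →ₗ[R] P)
    (hgf : ∀ x, g (f x) = 0) {Z₀ Zγ : Submodule R M} {W G : Submodule R N}
    (hZ : Zγ ≤ Z₀) (hfZ : Zγ.map f ≤ W) (hrep : LinearMap.ker g ⊓ W ≤ Zγ.map f ⊔ G)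
    (hdisj : Disjoint (Z₀.map f) G) :
    (Z₀ ⊓ W.comap f).map f = Zγ.map f := by
  refine le_antisymm ?_ fun _ ⟨z, hz, hfz⟩ =>
    hfz ▸ mem_map_of_mem ⟨hZ hz, hfZ (mem_map_of_mem hz)⟩
  rintro _ ⟨u, ⟨hu, hfu⟩, rfl⟩
  obtain ⟨_, ⟨z, hz, rfl⟩, c, hc, hsum⟩ := mem_sup.mp (hrep ⟨hgf u, hfu⟩)
  have hc_eq : c = f (u - z) := by rw [map_sub, ← hsum, add_sub_cancel_left]
  have hc0 : c = 0 :=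
    disjoint_def.mp hdisj c ⟨u - z, sub_mem hu (hZ hz), hc_eq.symm⟩ hc
  exact ⟨z, hz, by rw [← hsum, hc0, add_zero]⟩

end Submodule

theorem stmt_16_general
    (M : ℤ → Type*) [∀ k, AddCommGroup (M k)] [∀ k, Module ℝ (M k)]
    (D : ∀ k : ℤ, M k →ₗ[ℝ] M (k + 1))
    (hDD : ∀ (k : ℤ) (x : M k), D (k + 1) (D k x) = 0)
    (Zs : ∀ k : ℤ, ℝ → Submodule ℝ (M k))
    (hmono : ∀ (k : ℤ) (q q' : ℝ), q ≤ q' → Zs k q' ≤ Zs k q)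
    (γ : ℤ → ℝ) (hγ : ∀ k, 1 ≤ γ k)
    (hDZ : ∀ (k : ℤ) (q : ℝ), (Zs k q).map (D k) ≤ Zs (k + 1) (q - γ k))
    (G : ∀ k : ℤ, Submodule ℝ (M k))
    -- uniform representation of cohomology
    (hrep : ∀ (k : ℤ) (q : ℝ),
      LinearMap.ker (D (k + 1)) ⊓ Zs (k + 1) q = (Zs k (q + γ k)).map (D k) ⊔ G (k + 1)
        ∧ Disjoint ((Zs k (q + γ k)).map (D k)) (G (k + 1))) :
    ∀ k : ℤ,
      LinearMap.ker (D (k + 1)) ⊓ (Zs (k + 1) 0 ⊓ (Zs (k + 1 + 1) 0).comap (D (k + 1)))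
          = ((Zs k 0 ⊓ (Zs (k + 1) 0).comap (D k)).map (D k)) ⊔ G (k + 1)
        ∧ Disjoint ((Zs k 0 ⊓ (Zs (k + 1) 0).comap (D k)).map (D k)) (G (k + 1)) := by
  intro k
  obtain ⟨hsup, hdisj⟩ : _ ∧ _ := by simpa only [zero_add] using hrep k 0
  have hdisj₀ : Disjoint ((Zs k 0).map (D k)) (G (k + 1)) := by
    simpa only [neg_add_cancel] using (hrep k (-γ k)).2
  have hZ : Zs k (γ k) ≤ Zs k 0 := hmono k 0 (γ k) (by linarith [hγ k])
  have hDγ : (Zs k (γ k)).map (D k) ≤ Zs (k + 1) 0 := by simpa only [sub_self] using hDZ k (γ k)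
  have hmap := Submodule.map_inf_comap_eq_map_of_le_sup_of_disjoint (D k) (D (k + 1)) (hDD k) hZ hDγ
    hsup.le hdisj₀
  rw [Submodule.ker_inf_inf_comap_eq, hmap]
  exact ⟨hsup, hdisj⟩

theorem stmt_16
    (M : ℤ → Type*) [∀ k, AddCommGroup (M k)] [∀ k, Module ℝ (M k)]
    (D : ∀ k : ℤ, M k →ₗ[ℝ] M (k + 1))
    (hDD : ∀ (k : ℤ) (x : M k), D (k + 1) (D k x) = 0)
    (Zs : ∀ k : ℤ, ℝ → Submodule ℝ (M k))
    (hmono : ∀ (k : ℤ) (q q' : ℝ), q ≤ q' → Zs k q' ≤ Zs k q)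
    (γ : ℤ → ℝ) (hγ : ∀ k, 1 ≤ γ k)
    (hDZ : ∀ (k : ℤ) (q : ℝ), (Zs k q).map (D k) ≤ Zs (k + 1) (q - γ k))
    (G : ∀ k : ℤ, Submodule ℝ (M k))
    (hGfin : ∀ k, FiniteDimensional ℝ (G k))
    (hGsub : ∀ (k : ℤ) (q : ℝ), G k ≤ Zs k q)
    -- uniform representation of cohomology
    (hrep : ∀ (k : ℤ) (q : ℝ),
      LinearMap.ker (D (k + 1)) ⊓ Zs (k + 1) q = (Zs k (q + γ k)).map (D k) ⊔ G (k + 1)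
        ∧ Disjoint ((Zs k (q + γ k)).map (D k)) (G (k + 1))) :
    ∀ k : ℤ,
      LinearMap.ker (D (k + 1)) ⊓ (Zs (k + 1) 0 ⊓ (Zs (k + 1 + 1) 0).comap (D (k + 1)))
          = ((Zs k 0 ⊓ (Zs (k + 1) 0).comap (D k)).map (D k)) ⊔ G (k + 1)
        ∧ Disjoint ((Zs k 0 ⊓ (Zs (k + 1) 0).comap (D k)).map (D k)) (G (k + 1)) :=
  stmt_16_general M D hDD Zs hmono γ hγ hDZ G hrep
end

section
/- (Regular decomposition.) For every k ∈ ℤ, HW^k = D^{k−1}(Z^{k−1}_{γ_{k−1}}) + Z^k_{γ_k} as subspaces of M^k: every w ∈ HW^k can be written w = D^{k−1} y + z with y ∈ Z^{k−1}_{γ_{k−1}} and z ∈ Z^k_{γ_k}, and conversely both summands are contained in HW^k. -/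
/-!
If `u ∈ Z_q` and `D u ∈ Z_q`, then `D u` is closed, so `D u = D v + g` with `v ∈ Z_{q+γ}` and
`g ∈ G`. Since `g = D (u - v)` is also the differential of an element of `Z_q = Z_{(q-γ)+γ}`,
the directness of the decomposition one level lower forces `g = 0`. Hence `u - v` is closed and
lies in `Z_q`, so it is a regular differential plus an element of `G ⊆ Z_{q+γ}`.
-/

section RegularDecomposition

variable {M : ℤ → Type*} [∀ k, AddCommGroup (M k)] [∀ k, Module ℝ (M k)]
  {D : ∀ k : ℤ, M k →ₗ[ℝ] M (k + 1)} {Zs : ∀ k : ℤ, ℝ → Submodule ℝ (M k)} {γ : ℤ → ℝ}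
  {G : ∀ k : ℤ, Submodule ℝ (M k)}

theorem map_Zs_add_le (hDZ : ∀ (k : ℤ) (q : ℝ), (Zs k q).map (D k) ≤ Zs (k + 1) (q - γ k))
    (k : ℤ) (q : ℝ) : (Zs k (q + γ k)).map (D k) ≤ Zs (k + 1) q := by
  simpa only [add_sub_cancel_right] using hDZ k (q + γ k)

theorem exists_mem_Zs_add_D_eq (hDD : ∀ (k : ℤ) (x : M k), D (k + 1) (D k x) = 0)
    (hmono : ∀ (k : ℤ) (q q' : ℝ), q ≤ q' → Zs k q' ≤ Zs k q)
    (hrep : ∀ (k : ℤ) (q : ℝ),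
      LinearMap.ker (D (k + 1)) ⊓ Zs (k + 1) q = (Zs k (q + γ k)).map (D k) ⊔ G (k + 1)
        ∧ Disjoint ((Zs k (q + γ k)).map (D k)) (G (k + 1)))
    {k : ℤ} {q : ℝ} (hγ : 0 ≤ γ (k + 1)) {u : M (k + 1)} (hu : u ∈ Zs (k + 1) q)
    (hDu : D (k + 1) u ∈ Zs (k + 1 + 1) q) :
    ∃ v ∈ Zs (k + 1) (q + γ (k + 1)), D (k + 1) v = D (k + 1) u := by
  have hclosed : D (k + 1) u ∈ LinearMap.ker (D (k + 1 + 1)) ⊓ Zs (k + 1 + 1) q :=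
    ⟨hDD (k + 1) u, hDu⟩
  rw [(hrep (k + 1) q).1] at hclosed
  obtain ⟨_, ⟨v, hv, rfl⟩, g, hg, hsum⟩ := Submodule.mem_sup.mp hclosed
  have hg_map : g ∈ (Zs (k + 1) (q - γ (k + 1) + γ (k + 1))).map (D (k + 1)) := by
    refine ⟨u - v, ?_, by rw [map_sub, ← hsum, add_sub_cancel_left]⟩
    rw [sub_add_cancel]
    exact sub_mem hu (hmono _ _ _ (le_add_of_nonneg_right hγ) hv)
  have hg0 : g = 0 := Submodule.disjoint_def.mp (hrep (k + 1) (q - γ (k + 1))).2 g hg_map hg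
  exact ⟨v, hv, by rw [← hsum, hg0, add_zero]⟩

theorem map_sup_le_inf_comap (hDD : ∀ (k : ℤ) (x : M k), D (k + 1) (D k x) = 0)
    (hmono : ∀ (k : ℤ) (q q' : ℝ), q ≤ q' → Zs k q' ≤ Zs k q)
    (hDZ : ∀ (k : ℤ) (q : ℝ), (Zs k q).map (D k) ≤ Zs (k + 1) (q - γ k))
    {k : ℤ} {q : ℝ} (hγ : 0 ≤ γ (k + 1)) :
    (Zs k (q + γ k)).map (D k) ⊔ Zs (k + 1) (q + γ (k + 1))
      ≤ Zs (k + 1) q ⊓ (Zs (k + 1 + 1) q).comap (D (k + 1)) := by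
  refine sup_le ?_ ?_
  · rintro _ ⟨y, hy, rfl⟩
    refine Submodule.mem_inf.mpr ⟨map_Zs_add_le hDZ k q ⟨y, hy, rfl⟩, ?_⟩
    rw [Submodule.mem_comap, hDD k y]
    exact zero_mem _
  · exact fun x hx =>
      ⟨hmono _ _ _ (le_add_of_nonneg_right hγ) hx, map_Zs_add_le hDZ (k + 1) q ⟨x, hx, rfl⟩⟩

theorem inf_comap_le_map_sup (hDD : ∀ (k : ℤ) (x : M k), D (k + 1) (D k x) = 0)
    (hmono : ∀ (k : ℤ) (q q' : ℝ), q ≤ q' → Zs k q' ≤ Zs k q)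
    (hGsub : ∀ (k : ℤ) (q : ℝ), G k ≤ Zs k q)
    (hrep : ∀ (k : ℤ) (q : ℝ),
      LinearMap.ker (D (k + 1)) ⊓ Zs (k + 1) q = (Zs k (q + γ k)).map (D k) ⊔ G (k + 1)
        ∧ Disjoint ((Zs k (q + γ k)).map (D k)) (G (k + 1)))
    {k : ℤ} {q : ℝ} (hγ : 0 ≤ γ (k + 1)) :
    Zs (k + 1) q ⊓ (Zs (k + 1 + 1) q).comap (D (k + 1))
      ≤ (Zs k (q + γ k)).map (D k) ⊔ Zs (k + 1) (q + γ (k + 1)) := by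
  rintro u ⟨hu, hDu⟩
  obtain ⟨v, hv, hDv⟩ := exists_mem_Zs_add_D_eq hDD hmono hrep hγ hu hDu
  have hclosed : u - v ∈ LinearMap.ker (D (k + 1)) ⊓ Zs (k + 1) q :=
    Submodule.mem_inf.mpr ⟨by rw [LinearMap.mem_ker, map_sub, hDv, sub_self],
      sub_mem hu (hmono _ _ _ (le_add_of_nonneg_right hγ) hv)⟩
  rw [(hrep k q).1] at hclosed
  obtain ⟨_, ⟨y, hy, rfl⟩, g, hg, hsum⟩ := Submodule.mem_sup.mp hclosed
  rw [← sub_add_cancel u v, ← hsum, add_assoc]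
  exact Submodule.add_mem_sup ⟨y, hy, rfl⟩ (add_mem (hGsub _ _ hg) hv)

theorem inf_comap_eq_map_sup (hDD : ∀ (k : ℤ) (x : M k), D (k + 1) (D k x) = 0)
    (hmono : ∀ (k : ℤ) (q q' : ℝ), q ≤ q' → Zs k q' ≤ Zs k q)
    (hDZ : ∀ (k : ℤ) (q : ℝ), (Zs k q).map (D k) ≤ Zs (k + 1) (q - γ k))
    (hGsub : ∀ (k : ℤ) (q : ℝ), G k ≤ Zs k q)
    (hrep : ∀ (k : ℤ) (q : ℝ),
      LinearMap.ker (D (k + 1)) ⊓ Zs (k + 1) q = (Zs k (q + γ k)).map (D k) ⊔ G (k + 1)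
        ∧ Disjoint ((Zs k (q + γ k)).map (D k)) (G (k + 1)))
    {k : ℤ} {q : ℝ} (hγ : 0 ≤ γ (k + 1)) :
    Zs (k + 1) q ⊓ (Zs (k + 1 + 1) q).comap (D (k + 1))
      = (Zs k (q + γ k)).map (D k) ⊔ Zs (k + 1) (q + γ (k + 1)) :=
  le_antisymm (inf_comap_le_map_sup hDD hmono hGsub hrep hγ)
    (map_sup_le_inf_comap hDD hmono hDZ hγ)

end RegularDecomposition

theorem stmt_18_general
    (M : ℤ → Type*) [∀ k, AddCommGroup (M k)] [∀ k, Module ℝ (M k)]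
    (D : ∀ k : ℤ, M k →ₗ[ℝ] M (k + 1))
    (hDD : ∀ (k : ℤ) (x : M k), D (k + 1) (D k x) = 0)
    (Zs : ∀ k : ℤ, ℝ → Submodule ℝ (M k))
    (hmono : ∀ (k : ℤ) (q q' : ℝ), q ≤ q' → Zs k q' ≤ Zs k q)
    (γ : ℤ → ℝ) (hγ : ∀ k, 1 ≤ γ k)
    (hDZ : ∀ (k : ℤ) (q : ℝ), (Zs k q).map (D k) ≤ Zs (k + 1) (q - γ k))
    (G : ∀ k : ℤ, Submodule ℝ (M k))
    (hGsub : ∀ (k : ℤ) (q : ℝ), G k ≤ Zs k q)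
    -- uniform representation of cohomology
    (hrep : ∀ (k : ℤ) (q : ℝ),
      LinearMap.ker (D (k + 1)) ⊓ Zs (k + 1) q = (Zs k (q + γ k)).map (D k) ⊔ G (k + 1)
        ∧ Disjoint ((Zs k (q + γ k)).map (D k)) (G (k + 1))) :
    ∀ k : ℤ,
      Zs (k + 1) 0 ⊓ (Zs (k + 1 + 1) 0).comap (D (k + 1))
        = (Zs k (γ k)).map (D k) ⊔ Zs (k + 1) (γ (k + 1)) := by
  intro k
  simpa only [zero_add] using
    inf_comap_eq_map_sup hDD hmono hDZ hGsub hrep (q := 0) (zero_le_one.trans (hγ (k + 1)))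

theorem stmt_18
    (M : ℤ → Type*) [∀ k, AddCommGroup (M k)] [∀ k, Module ℝ (M k)]
    (D : ∀ k : ℤ, M k →ₗ[ℝ] M (k + 1))
    (hDD : ∀ (k : ℤ) (x : M k), D (k + 1) (D k x) = 0)
    (Zs : ∀ k : ℤ, ℝ → Submodule ℝ (M k))
    (hmono : ∀ (k : ℤ) (q q' : ℝ), q ≤ q' → Zs k q' ≤ Zs k q)
    (γ : ℤ → ℝ) (hγ : ∀ k, 1 ≤ γ k)
    (hDZ : ∀ (k : ℤ) (q : ℝ), (Zs k q).map (D k) ≤ Zs (k + 1) (q - γ k))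
    (G : ∀ k : ℤ, Submodule ℝ (M k))
    (hGfin : ∀ k, FiniteDimensional ℝ (G k))
    (hGsub : ∀ (k : ℤ) (q : ℝ), G k ≤ Zs k q)
    -- uniform representation of cohomology
    (hrep : ∀ (k : ℤ) (q : ℝ),
      LinearMap.ker (D (k + 1)) ⊓ Zs (k + 1) q = (Zs k (q + γ k)).map (D k) ⊔ G (k + 1)
        ∧ Disjoint ((Zs k (q + γ k)).map (D k)) (G (k + 1))) :
    ∀ k : ℤ,
      Zs (k + 1) 0 ⊓ (Zs (k + 1 + 1) 0).comap (D (k + 1))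
        = (Zs k (γ k)).map (D k) ⊔ Zs (k + 1) (γ (k + 1)) :=
  stmt_18_general M D hDD Zs hmono γ hγ hDZ G hGsub hrep
end
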